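/- arXiv:2001.02425 — 6 statements merged into one kernel-verified Lean document; each statement's English description precedes it below -/
import Mathlib

section
/- Fix an integer L ≥ 2, an integer n with 0 ≤ n ≤ L−1, and real parameters p, q. Let σ : ZMod L → {0,1,2} be any configuration having exactly one site t with σ(t) = 2 and exactly n sites with value 1 (all other sites having value 0). Then the stationary weight W satisfies the master equation: ∑_{i ∈ ZMod L} r(σ(i+1), σ(i)) · W(σ^{(i)}) = W(σ) · ∑_{i ∈ ZMod L} r(σ(i), σ(i+1)), where σ^{(i)} denotes the configuration obtained from σ by exchanging the values at sites i and i+1. -/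
open Finset

/-- The jump rate function: `r(1,0) = 1`, `r(0,1) = 1`, `r(2,0) = p`, `r(0,2) = q`,
and `r(b,c) = 0` for all other pairs.  Here `2` denotes the tracer particle, `1` an
ordinary particle and `0` a vacancy. -/
noncomputable def rate (p q : ℝ) (b c : Fin 3) : ℝ :=
  if b = 1 ∧ c = 0 then 1
  else if b = 0 ∧ c = 1 then 1
  else if b = 2 ∧ c = 0 then p
  else if b = 0 ∧ c = 2 then q
  else 0

/-- The stationary weight of a configuration `σ` relative to a tracer site `t`:
`∏_{i=1}^{L-1, σ(t+i)=0} (1 + p·#{j : 1 ≤ j < i, σ(t+j) = 1} + q·#{j : i < j ≤ L-1, σ(t+j) = 1})`. -/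
noncomputable def Wloc (p q : ℝ) (L : ℕ) (σ : ZMod L → Fin 3) (t : ZMod L) : ℝ :=
  ∏ i ∈ (Finset.Ico 1 L).filter (fun i : ℕ => σ (t + (i : ZMod L)) = 0),
    (1 + p * (((Finset.Ico 1 i).filter (fun j : ℕ => σ (t + (j : ZMod L)) = 1)).card : ℝ)
       + q * (((Finset.Ico (i + 1) L).filter (fun j : ℕ => σ (t + (j : ZMod L)) = 1)).card : ℝ))

/-- The stationary weight of a configuration: for an admissible configuration (exactly one
tracer site), this is `Wloc` evaluated at the unique site `t` with `σ t = 2`. -/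
noncomputable def W (p q : ℝ) (L : ℕ) [NeZero L] (σ : ZMod L → Fin 3) : ℝ :=
  ∑ t ∈ univ.filter (fun t : ZMod L => σ t = 2), Wloc p q L σ t

/-- The configuration `σ^{(i)}` obtained from `σ` by exchanging the values at sites
`i` and `i + 1`. -/
def swapAt {L : ℕ} (σ : ZMod L → Fin 3) (i : ZMod L) : ZMod L → Fin 3 :=
  fun x => if x = i then σ (i + 1) else if x = i + 1 then σ i else σ x

/-!
Read `σ` from its tracer site `t` as the word `w k = σ (t + k)`, so that `w 0 = w L = 2`.
Then `W σ` is the product, over the vacancies `i` of `w`, of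
`f i = 1 + p·(ones before i) + q·(ones after i)`. Let `E k` be the product of the factors of
all vacancies other than `k`, and `E k = 0` if `k` is not a vacancy. Every bond term of the
master equation equals `(p - q) (E k - E (k + 1))`:
* if both or neither of `k`, `k + 1` are vacancies the rates vanish, and adjacent vacancies
  have equal factors, so `E k = E (k + 1)`;
* if a particle and a vacancy exchange, only the factor of the moving vacancy changes, by
  `±(p - q)`;
* if the tracer and a vacancy exchange, the word is rotated by one site: with `N` ordinary
  particles, the factor `1 + q N` of that vacancy becomes `1 + p N` (or back), the other
  factors are unchanged, and `q (1 + p N) - p (1 + q N) = q - p`.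
So the sum over the bonds telescopes to `(p - q) (E 0 - E L) = 0`.
-/

open Equiv

def onesIn (w : ℕ → Fin 3) (a b : ℕ) : ℕ := ((Ico a b).filter (fun j => w j = 1)).card

def vacancies (L : ℕ) (w : ℕ → Fin 3) : Finset ℕ := (Ico 1 L).filter (fun i => w i = 0)

noncomputable def vacancyFactor (p q : ℝ) (L : ℕ) (w : ℕ → Fin 3) (i : ℕ) : ℝ :=
  1 + p * onesIn w 1 i + q * onesIn w (i + 1) L

noncomputable def wordWeight (p q : ℝ) (L : ℕ) (w : ℕ → Fin 3) : ℝ :=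
  ∏ i ∈ vacancies L w, vacancyFactor p q L w i

noncomputable def vacancyCofactor (p q : ℝ) (L : ℕ) (w : ℕ → Fin 3) (k : ℕ) : ℝ :=
  if k ∈ vacancies L w then ∏ i ∈ (vacancies L w).erase k, vacancyFactor p q L w i else 0

section Word

variable {p q : ℝ} {L : ℕ} {w u : ℕ → Fin 3} {a b i k : ℕ}

theorem mem_vacancies : i ∈ vacancies L w ↔ (1 ≤ i ∧ i < L) ∧ w i = 0 := by
  simp [vacancies]

theorem onesIn_succ_right (h : a ≤ b) :
    onesIn w a (b + 1) = onesIn w a b + if w b = 1 then 1 else 0 := by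
  simp only [onesIn, card_filter, sum_Ico_succ_top h]

theorem onesIn_eq_succ_left (h : a < b) :
    onesIn w a b = (if w a = 1 then 1 else 0) + onesIn w (a + 1) b := by
  simp only [onesIn, card_filter, sum_eq_sum_Ico_succ_bot h]

theorem onesIn_congr (h : ∀ j, a ≤ j → j < b → w j = u j) :
    onesIn w a b = onesIn u a b := by
  simp only [onesIn, card_filter]
  exact sum_congr rfl fun j hj => by rw [h j (mem_Ico.1 hj).1 (mem_Ico.1 hj).2]

theorem onesIn_shift (h : ∀ j, a ≤ j → j < b → u j = w (j + 1)) :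
    onesIn u a b = onesIn w (a + 1) (b + 1) := by
  simp only [onesIn, card_filter, ← sum_Ico_add' (fun j => if w j = 1 then 1 else 0)]
  exact sum_congr rfl fun j hj => by rw [h j (mem_Ico.1 hj).1 (mem_Ico.1 hj).2]

theorem onesIn_comp_swap (h : k ∈ Ico a b ↔ k + 1 ∈ Ico a b) :
    onesIn (w ∘ swap k (k + 1)) a b = onesIn w a b := by
  simp only [onesIn, card_filter]
  by_cases hk : k ∈ Ico a b
  · refine Perm.sum_comp _ _ (fun j => if w j = 1 then 1 else 0) fun j hj => ?_
    rcases eq_or_eq_of_swap_apply_ne_self hj with rfl | rfl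
    exacts [hk, h.1 hk]
  · refine sum_congr rfl fun j hj => ?_
    rw [Function.comp_apply, swap_apply_of_ne_of_ne (by rintro rfl; exact hk hj)
      (by rintro rfl; exact hk (h.2 hj))]

theorem vacancyFactor_congr (h : ∀ j, 1 ≤ j → j < L → w j = u j) (hi : i < L) :
    vacancyFactor p q L w i = vacancyFactor p q L u i := by
  rw [vacancyFactor, vacancyFactor, onesIn_congr fun j hj hji => h j hj (by omega),
    onesIn_congr fun j hj hjL => h j (by omega) hjL]

theorem wordWeight_congr (h : ∀ j, 1 ≤ j → j < L → w j = u j) :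
    wordWeight p q L w = wordWeight p q L u := by
  have hS : vacancies L w = vacancies L u :=
    filter_congr fun j hj => by rw [h j (mem_Ico.1 hj).1 (mem_Ico.1 hj).2]
  rw [wordWeight, wordWeight, hS]
  exact prod_congr rfl fun i hi => vacancyFactor_congr h (mem_vacancies.1 hi).1.2

theorem wordWeight_eq_mul_vacancyCofactor (hk : k ∈ vacancies L w) :
    wordWeight p q L w = vacancyFactor p q L w k * vacancyCofactor p q L w k := by
  rw [wordWeight, vacancyCofactor, if_pos hk, mul_prod_erase _ _ hk]

theorem vacancyCofactor_of_notMem (hk : k ∉ vacancies L w) : vacancyCofactor p q L w k = 0 :=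
  if_neg hk

theorem vacancyFactor_succ_of_eq_zero (hk : 1 ≤ k) (hkL : k + 1 < L) (h : w k = 0)
    (h' : w (k + 1) = 0) : vacancyFactor p q L w (k + 1) = vacancyFactor p q L w k := by
  simp [vacancyFactor, onesIn_succ_right hk, onesIn_eq_succ_left hkL, h, h']

theorem vacancyCofactor_succ (h : k ∈ vacancies L w ↔ k + 1 ∈ vacancies L w) :
    vacancyCofactor p q L w (k + 1) = vacancyCofactor p q L w k := by
  by_cases hk : k ∈ vacancies L w
  · have hk' := h.1 hk
    obtain ⟨⟨h1, -⟩, h0⟩ := mem_vacancies.1 hk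
    obtain ⟨⟨-, hL⟩, h0'⟩ := mem_vacancies.1 hk'
    rw [vacancyCofactor, if_pos hk', ← mul_prod_erase _ _ (mem_erase.2 ⟨by omega, hk⟩),
      vacancyCofactor, if_pos hk, ← mul_prod_erase _ _ (mem_erase.2 ⟨by omega, hk'⟩),
      erase_right_comm, vacancyFactor_succ_of_eq_zero h1 hL h0 h0']
  · rw [vacancyCofactor_of_notMem hk, vacancyCofactor_of_notMem (mt h.2 hk)]

end Word

section Hops

variable {p q : ℝ} {L : ℕ} {w u : ℕ → Fin 3} {i k : ℕ}

theorem vacancies_comp_swap_erase (h1 : w k = 1) (h0 : w (k + 1) = 0) :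
    (vacancies L (w ∘ swap k (k + 1))).erase k = (vacancies L w).erase (k + 1) := by
  ext i
  simp only [mem_erase, mem_vacancies, Function.comp_apply]
  by_cases hi : i = k
  · subst hi; simp [h1]
  by_cases hi' : i = k + 1
  · subst hi'; simp [h1]
  · rw [swap_apply_of_ne_of_ne hi hi']; tauto

theorem vacancyFactor_comp_swap_of_ne (hk : 1 ≤ k) (hkL : k + 1 < L) (hik : i ≠ k)
    (hik' : i ≠ k + 1) :
    vacancyFactor p q L (w ∘ swap k (k + 1)) i = vacancyFactor p q L w i := by
  rw [vacancyFactor, vacancyFactor, onesIn_comp_swap (by simp only [mem_Ico]; omega),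
    onesIn_comp_swap (by simp only [mem_Ico]; omega)]

theorem vacancyFactor_comp_swap_self (hk : 1 ≤ k) (hkL : k + 1 < L) (h1 : w k = 1) :
    vacancyFactor p q L (w ∘ swap k (k + 1)) k = vacancyFactor p q L w (k + 1) + q - p := by
  have below : onesIn (w ∘ swap k (k + 1)) 1 k = onesIn w 1 k :=
    onesIn_comp_swap (by simp only [mem_Ico]; omega)
  have above : onesIn (w ∘ swap k (k + 1)) (k + 1 + 1) L = onesIn w (k + 1 + 1) L :=
    onesIn_comp_swap (by simp only [mem_Ico]; omega)
  rw [vacancyFactor, vacancyFactor, onesIn_eq_succ_left (w := w ∘ swap k (k + 1)) hkL,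
    onesIn_succ_right (w := w) hk, below, above]
  simp [h1]
  ring

theorem vacancyCofactor_comp_swap (hk : 1 ≤ k) (hkL : k + 1 < L) (h1 : w k = 1)
    (h0 : w (k + 1) = 0) :
    vacancyCofactor p q L (w ∘ swap k (k + 1)) k = vacancyCofactor p q L w (k + 1) := by
  have hk' : k ∈ vacancies L (w ∘ swap k (k + 1)) :=
    mem_vacancies.2 ⟨⟨hk, by omega⟩, by simp [h0]⟩
  have hk1 : k + 1 ∈ vacancies L w := mem_vacancies.2 ⟨⟨by omega, hkL⟩, h0⟩
  rw [vacancyCofactor, if_pos hk', vacancies_comp_swap_erase h1 h0, vacancyCofactor, if_pos hk1]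
  refine prod_congr rfl fun i hi => vacancyFactor_comp_swap_of_ne hk hkL ?_ (mem_erase.1 hi).1
  rintro rfl
  simp [mem_vacancies, h1] at hi

theorem wordWeight_comp_swap_sub_of_one_zero (hk : 1 ≤ k) (hkL : k + 1 < L) (h1 : w k = 1)
    (h0 : w (k + 1) = 0) :
    wordWeight p q L (w ∘ swap k (k + 1)) - wordWeight p q L w
      = (q - p) * vacancyCofactor p q L w (k + 1) := by
  have hk' : k ∈ vacancies L (w ∘ swap k (k + 1)) :=
    mem_vacancies.2 ⟨⟨hk, by omega⟩, by simp [h0]⟩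
  rw [wordWeight_eq_mul_vacancyCofactor hk',
    wordWeight_eq_mul_vacancyCofactor (mem_vacancies.2 ⟨⟨by omega, hkL⟩, h0⟩),
    vacancyFactor_comp_swap_self hk hkL h1, vacancyCofactor_comp_swap hk hkL h1 h0]
  ring

theorem wordWeight_comp_swap_sub_of_zero_one (hk : 1 ≤ k) (hkL : k + 1 < L) (h0 : w k = 0)
    (h1 : w (k + 1) = 1) :
    wordWeight p q L (w ∘ swap k (k + 1)) - wordWeight p q L w
      = (p - q) * vacancyCofactor p q L w k := by
  have hw : (w ∘ swap k (k + 1)) ∘ swap k (k + 1) = w := by ext; simp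
  have hv1 : (w ∘ swap k (k + 1)) k = 1 := by simp [h1]
  have hv0 : (w ∘ swap k (k + 1)) (k + 1) = 0 := by simp [h0]
  have hW := wordWeight_comp_swap_sub_of_one_zero (p := p) (q := q) hk hkL hv1 hv0
  have hE := vacancyCofactor_comp_swap (p := p) (q := q) hk hkL hv1 hv0
  rw [hw] at hW hE
  rw [hE]
  linarith

-- `u` is the word seen from the tracer after it has hopped onto the vacancy at site `1` of `w`.
theorem vacancyFactor_rotate (hw : w 1 = 0) (hu : ∀ j, 1 ≤ j → j + 1 < L → u j = w (j + 1))
    (huL : u (L - 1) = 0) (hi : 1 ≤ i) (hiL : i + 1 < L) :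
    vacancyFactor p q L u i = vacancyFactor p q L w (i + 1) := by
  obtain ⟨M, rfl⟩ : ∃ M, L = M + 1 := ⟨L - 1, by omega⟩
  rw [Nat.add_sub_cancel] at huL
  have below : onesIn u 1 i = onesIn w 1 (i + 1) := by
    rw [onesIn_shift fun j hj hji => hu j hj (by omega),
      onesIn_eq_succ_left (a := 1) (w := w) (by omega)]
    simp [hw]
  have above : onesIn u (i + 1) (M + 1) = onesIn w (i + 1 + 1) (M + 1) := by
    rw [onesIn_succ_right (by omega), onesIn_shift fun j hj hjM => hu j (by omega) (by omega)]
    simp [huL]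
  rw [vacancyFactor, vacancyFactor, below, above]

theorem vacancyCofactor_rotate (hL : 2 ≤ L) (hw : w 1 = 0)
    (hu : ∀ j, 1 ≤ j → j + 1 < L → u j = w (j + 1)) (huL : u (L - 1) = 0) :
    vacancyCofactor p q L u (L - 1) = vacancyCofactor p q L w 1 := by
  have hu' : L - 1 ∈ vacancies L u := mem_vacancies.2 ⟨⟨by omega, by omega⟩, huL⟩
  have hw' : 1 ∈ vacancies L w := mem_vacancies.2 ⟨⟨le_rfl, by omega⟩, hw⟩
  have eu : (vacancies L u).erase (L - 1) = (Ico 1 (L - 1)).filter (u · = 0) := by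
    ext i; simp only [mem_erase, mem_vacancies, mem_filter, mem_Ico]; omega
  have ew : (vacancies L w).erase 1 = (Ico (1 + 1) (L - 1 + 1)).filter (w · = 0) := by
    ext i; simp only [mem_erase, mem_vacancies, mem_filter, mem_Ico]; omega
  rw [vacancyCofactor, if_pos hu', eu, vacancyCofactor, if_pos hw', ew, prod_filter, prod_filter,
    ← prod_Ico_add']
  refine prod_congr rfl fun i hi => ?_
  obtain ⟨hi1, hiL⟩ := mem_Ico.1 hi
  rw [hu i hi1 (by omega), vacancyFactor_rotate hw hu huL hi1 (by omega)]

theorem wordWeight_rotate_sub (hL : 2 ≤ L) (hw : w 1 = 0)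
    (hu : ∀ j, 1 ≤ j → j + 1 < L → u j = w (j + 1)) (huL : u (L - 1) = 0) :
    q * wordWeight p q L u - p * wordWeight p q L w = (q - p) * vacancyCofactor p q L w 1 := by
  have hu' : L - 1 ∈ vacancies L u := mem_vacancies.2 ⟨⟨by omega, by omega⟩, huL⟩
  have hw' : 1 ∈ vacancies L w := mem_vacancies.2 ⟨⟨le_rfl, by omega⟩, hw⟩
  have fu : vacancyFactor p q L u (L - 1) = 1 + p * onesIn w 2 L := by
    rw [vacancyFactor, onesIn_shift fun j hj hjL => hu j hj (by omega),
      Nat.sub_add_cancel (by omega)]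
    simp [onesIn]
  have fw : vacancyFactor p q L w 1 = 1 + q * onesIn w 2 L := by simp [vacancyFactor, onesIn]
  rw [wordWeight_eq_mul_vacancyCofactor hu', wordWeight_eq_mul_vacancyCofactor hw', fu, fw,
    vacancyCofactor_rotate hL hw hu huL]
  ring

end Hops

def word {L : ℕ} (σ : ZMod L → Fin 3) (t : ZMod L) (k : ℕ) : Fin 3 := σ (t + k)

theorem Wloc_eq_wordWeight (p q : ℝ) {L : ℕ} (σ : ZMod L → Fin 3) (t : ZMod L) :
    Wloc p q L σ t = wordWeight p q L (word σ t) := rfl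

section Configurations

variable {p q : ℝ} {L : ℕ} {σ : ZMod L → Fin 3} {s t : ZMod L} {k : ℕ}

theorem swapAt_eq_comp_swap (i : ZMod L) : swapAt σ i = σ ∘ swap i (i + 1) := by
  funext x
  rw [swapAt, Function.comp_apply, swap_apply_def]
  split_ifs <;> rfl

theorem swapAt_swapAt (i : ZMod L) : swapAt (swapAt σ i) i = σ := by
  ext; simp [swapAt_eq_comp_swap]

theorem swapAt_eq_two_iff (ht : ∀ x, σ x = 2 ↔ x = t) (i x : ZMod L) :
    swapAt σ i x = 2 ↔ x = swap i (i + 1) t := by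
  rw [swapAt_eq_comp_swap, Function.comp_apply, ht, swap_apply_eq_iff]

theorem word_eq_two_iff (ht : ∀ x, σ x = 2 ↔ x = t) (j : ℕ) :
    word σ t j = 2 ↔ L ∣ j := by
  rw [word, ht, add_eq_left, ZMod.natCast_eq_zero_iff]

theorem word_eq_two_iff_of_lt (ht : ∀ x, σ x = 2 ↔ x = t) (hk : k < L) :
    word σ t k = 2 ↔ k = 0 := by
  rw [word_eq_two_iff ht]
  exact ⟨fun h => Nat.eq_zero_of_dvd_of_lt h hk, by rintro rfl; exact dvd_zero L⟩

theorem word_succ_eq_two_iff (ht : ∀ x, σ x = 2 ↔ x = t) (hk : k < L) :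
    word σ t (k + 1) = 2 ↔ k + 1 = L := by
  rw [word_eq_two_iff ht]
  exact ⟨fun h => le_antisymm hk (Nat.le_of_dvd k.succ_pos h), by rintro rfl; rfl⟩

theorem mem_vacancies_word (ht : ∀ x, σ x = 2 ↔ x = t) {j : ℕ} (hj : j ≤ L) :
    j ∈ vacancies L (word σ t) ↔ word σ t j = 0 := by
  rw [mem_vacancies, and_iff_right_iff_imp]
  intro h
  have hdvd : ¬ L ∣ j := fun hd => by simp [(word_eq_two_iff ht j).2 hd] at h
  exact ⟨Nat.one_le_iff_ne_zero.2 (by rintro rfl; exact hdvd (dvd_zero L)),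
    lt_of_le_of_ne hj (by rintro rfl; exact hdvd dvd_rfl)⟩

theorem swap_add_natCast {a b j : ℕ} (ha : a < L) (hb : b < L) (hj : j < L) :
    swap (t + a) (t + b) (t + j) = t + (swap a b j : ℕ) := by
  have inj : ∀ {x y : ℕ}, x < L → y < L → (t + x = t + y ↔ x = y) := fun hx hy => by
    rw [add_right_inj, ZMod.natCast_eq_natCast_iff', Nat.mod_eq_of_lt hx, Nat.mod_eq_of_lt hy]
  simp only [swap_apply_def, inj hj ha, inj hj hb]
  split_ifs <;> rfl

theorem word_swapAt_succ {j : ℕ} (hj : 1 ≤ j) (hjL : j + 1 < L) :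
    word (swapAt σ s) (s + 1) j = word σ s (j + 1) := by
  have h := swap_add_natCast (t := s) (Nat.zero_lt_of_lt hjL) (by omega : 1 < L) hjL
  rw [swap_apply_of_ne_of_ne (by omega : j + 1 ≠ 0) (by omega : j + 1 ≠ 1)] at h
  simp only [Nat.cast_zero, add_zero, Nat.cast_one] at h
  rw [word, word, swapAt_eq_comp_swap, Function.comp_apply,
    show s + 1 + (j : ZMod L) = s + ((j + 1 : ℕ) : ZMod L) by push_cast; ring, h]

variable [NeZero L]

theorem W_eq_wordWeight (ht : ∀ x, σ x = 2 ↔ x = t) :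
    W p q L σ = wordWeight p q L (word σ t) := by
  rw [W, show univ.filter (σ · = 2) = {t} by ext; simp [ht], sum_singleton, Wloc_eq_wordWeight]

theorem W_swapAt_add (ht : ∀ x, σ x = 2 ↔ x = t) (hk : 1 ≤ k) (hkL : k + 1 < L) :
    W p q L (swapAt σ (t + k)) = wordWeight p q L (word σ t ∘ swap k (k + 1)) := by
  have hswap : ∀ j < L, swap (t + k) (t + k + 1) (t + j) = t + (swap k (k + 1) j : ℕ) :=
    fun j hj => by
      rw [show t + (k : ZMod L) + 1 = t + ((k + 1 : ℕ) : ZMod L) by push_cast; ring]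
      exact swap_add_natCast (by omega) hkL hj
  have hfix : swap (t + k) (t + k + 1) t = t := by
    simpa [swap_apply_of_ne_of_ne (by omega : 0 ≠ k) (by omega : 0 ≠ k + 1)]
      using hswap 0 (by omega)
  have ht' : ∀ x, swapAt σ (t + k) x = 2 ↔ x = t := fun x => by
    rw [swapAt_eq_two_iff ht, hfix]
  rw [W_eq_wordWeight ht']
  refine wordWeight_congr fun j _ hj => ?_
  rw [word, swapAt_eq_comp_swap, Function.comp_apply, hswap j hj]
  rfl

theorem word_swapAt_succ_last : word (swapAt σ s) (s + 1) (L - 1) = word σ s 1 := by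
  have hs : s + 1 + ((L - 1 : ℕ) : ZMod L) = s := by
    rw [Nat.cast_sub NeZero.one_le, ZMod.natCast_self, Nat.cast_one]; ring
  rw [word, hs, swapAt_eq_comp_swap, Function.comp_apply, swap_apply_left, word, Nat.cast_one]

theorem two_le_of_tracer_hop (hs : ∀ x, σ x = 2 ↔ x = s) (h0 : σ (s + 1) = 0) : 2 ≤ L := by
  have h1 : (1 : ZMod L) ≠ 0 := fun h => by simp [h, (hs s).2 rfl] at h0
  have := NeZero.ne L
  have := mt ZMod.one_eq_zero_iff.2 h1
  omega

theorem tracer_hop_right (hs : ∀ x, σ x = 2 ↔ x = s) (h0 : σ (s + 1) = 0) :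
    q * W p q L (swapAt σ s) - p * W p q L σ = (q - p) * vacancyCofactor p q L (word σ s) 1 := by
  have hs' : ∀ x, swapAt σ s x = 2 ↔ x = s + 1 := fun x => by
    rw [swapAt_eq_two_iff hs, swap_apply_left]
  have hw : word σ s 1 = 0 := by rwa [word, Nat.cast_one]
  rw [W_eq_wordWeight hs', W_eq_wordWeight hs]
  exact wordWeight_rotate_sub (two_le_of_tracer_hop hs h0) hw
    (fun j hj hjL => word_swapAt_succ hj hjL) (word_swapAt_succ_last.trans hw)

theorem vacancyCofactor_word_swapAt (hs : ∀ x, σ x = 2 ↔ x = s) (h0 : σ (s + 1) = 0) :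
    vacancyCofactor p q L (word (swapAt σ s) (s + 1)) (L - 1)
      = vacancyCofactor p q L (word σ s) 1 := by
  have hw : word σ s 1 = 0 := by rwa [word, Nat.cast_one]
  exact vacancyCofactor_rotate (two_le_of_tracer_hop hs h0) hw
    (fun j hj hjL => word_swapAt_succ hj hjL) (word_swapAt_succ_last.trans hw)

theorem tracer_hop_left (hs : ∀ x, σ x = 2 ↔ x = s + 1) (h0 : σ s = 0) :
    p * W p q L (swapAt σ s) - q * W p q L σ
      = (p - q) * vacancyCofactor p q L (word σ (s + 1)) (L - 1) := by
  have hτ : ∀ x, swapAt σ s x = 2 ↔ x = s := fun x => by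
    rw [swapAt_eq_two_iff hs, swap_apply_right]
  have hτ0 : swapAt σ s (s + 1) = 0 := by
    rwa [swapAt_eq_comp_swap, Function.comp_apply, swap_apply_right]
  have hW := tracer_hop_right (p := p) (q := q) hτ hτ0
  have hE := vacancyCofactor_word_swapAt (p := p) (q := q) hτ hτ0
  rw [swapAt_swapAt] at hW hE
  rw [hE]
  linarith

end Configurations

theorem rate_eq_zero_of_iff (p q : ℝ) {b c : Fin 3} (h : b = 0 ↔ c = 0) :
    rate p q b c = 0 := by
  fin_cases b <;> fin_cases c <;> simp_all [rate]

theorem rate_one_zero (p q : ℝ) : rate p q 1 0 = 1 := by simp [rate]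

theorem rate_zero_one (p q : ℝ) : rate p q 0 1 = 1 := by simp [rate]

theorem rate_two_zero (p q : ℝ) : rate p q 2 0 = p := by simp [rate]

theorem rate_zero_two (p q : ℝ) : rate p q 0 2 = q := by simp [rate]

theorem sum_zmod_eq_sum_range {M : Type*} [AddCommMonoid M] {L : ℕ} [NeZero L] (t : ZMod L)
    (F : ZMod L → M) : ∑ i, F i = ∑ k ∈ range L, F (t + k) := by
  rw [← Equiv.sum_comp (Equiv.addLeft t) F]
  refine sum_nbij' (fun i => i.val) (fun k => k) ?_ ?_ ?_ ?_ ?_ <;> intros <;>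
    simp_all [ZMod.val_lt, Nat.mod_eq_of_lt]

section Bonds

variable {p q : ℝ} {L : ℕ} [NeZero L] {σ : ZMod L → Fin 3} {t : ZMod L} {k : ℕ}

theorem bond_term_eq_of_eq_zero_of_ne_zero (ht : ∀ x, σ x = 2 ↔ x = t) (hk : k < L)
    (h0 : word σ t k = 0) (h1 : word σ t (k + 1) ≠ 0) :
    rate p q (word σ t (k + 1)) (word σ t k) * W p q L (swapAt σ (t + k))
        - W p q L σ * rate p q (word σ t k) (word σ t (k + 1))
      = (p - q) * vacancyCofactor p q L (word σ t) k := by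
  have hk1 : 1 ≤ k :=
    Nat.one_le_iff_ne_zero.2 fun hk0 => by simp [(word_eq_two_iff_of_lt ht hk).2 hk0] at h0
  rw [h0]
  obtain h1 | h1 := (by decide : ∀ b : Fin 3, b ≠ 0 → b = 1 ∨ b = 2) _ h1
  · have hkL : k + 1 < L :=
      lt_of_le_of_ne hk fun hL => by simp [(word_succ_eq_two_iff ht hk).2 hL] at h1
    rw [h1, W_swapAt_add ht hk1 hkL, W_eq_wordWeight ht, rate_one_zero, rate_zero_one, one_mul,
      mul_one, wordWeight_comp_swap_sub_of_zero_one hk1 hkL h0 h1]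
  · have hs : t + (k : ZMod L) + 1 = t := by
      rw [add_assoc, ← Nat.cast_add_one, (word_succ_eq_two_iff ht hk).1 h1, ZMod.natCast_self,
        add_zero]
    have hop := tracer_hop_left (p := p) (q := q) (s := t + (k : ZMod L)) (by rwa [hs]) h0
    rw [hs, show L - 1 = k by have := (word_succ_eq_two_iff ht hk).1 h1; omega] at hop
    rw [h1, rate_two_zero, rate_zero_two, ← hop, mul_comm q]

theorem bond_term_eq_of_ne_zero_of_eq_zero (ht : ∀ x, σ x = 2 ↔ x = t) (hk : k < L)
    (h0 : word σ t k ≠ 0) (h1 : word σ t (k + 1) = 0) :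
    rate p q (word σ t (k + 1)) (word σ t k) * W p q L (swapAt σ (t + k))
        - W p q L σ * rate p q (word σ t k) (word σ t (k + 1))
      = (q - p) * vacancyCofactor p q L (word σ t) (k + 1) := by
  have hkL : k + 1 < L :=
    lt_of_le_of_ne hk fun hL => by simp [(word_succ_eq_two_iff ht hk).2 hL] at h1
  rw [h1]
  obtain h0 | h0 := (by decide : ∀ b : Fin 3, b ≠ 0 → b = 1 ∨ b = 2) _ h0
  · have hk1 : 1 ≤ k :=
      Nat.one_le_iff_ne_zero.2 fun hk0 => by simp [(word_eq_two_iff_of_lt ht hk).2 hk0] at h0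
    rw [h0, W_swapAt_add ht hk1 hkL, W_eq_wordWeight ht, rate_one_zero, rate_zero_one, one_mul,
      mul_one, wordWeight_comp_swap_sub_of_one_zero hk1 hkL h0 h1]
  · obtain rfl := (word_eq_two_iff_of_lt ht hk).1 h0
    have hop := tracer_hop_right (p := p) (q := q) ht (by simpa [word] using h1)
    rw [h0, rate_two_zero, rate_zero_two, Nat.cast_zero, add_zero, mul_comm _ p, hop]

theorem bond_term_eq (ht : ∀ x, σ x = 2 ↔ x = t) (hk : k < L) :
    rate p q (σ (t + k + 1)) (σ (t + k)) * W p q L (swapAt σ (t + k))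
        - W p q L σ * rate p q (σ (t + k)) (σ (t + k + 1))
      = (p - q) * (vacancyCofactor p q L (word σ t) k
          - vacancyCofactor p q L (word σ t) (k + 1)) := by
  have hσk : σ (t + k + 1) = word σ t (k + 1) := by simp [word, add_assoc]
  have vac := mem_vacancies_word ht hk.le
  have vac' := mem_vacancies_word ht (j := k + 1) hk
  rw [hσk, show σ (t + k) = word σ t k from rfl]
  by_cases hiff : word σ t k = 0 ↔ word σ t (k + 1) = 0
  · rw [rate_eq_zero_of_iff p q hiff.symm, rate_eq_zero_of_iff p q hiff,
      vacancyCofactor_succ (vac.trans (hiff.trans vac'.symm))]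
    ring
  by_cases h0 : word σ t k = 0
  · have h1 : word σ t (k + 1) ≠ 0 := fun h1 => hiff (iff_of_true h0 h1)
    rw [vacancyCofactor_of_notMem (mt vac'.1 h1), sub_zero]
    exact bond_term_eq_of_eq_zero_of_ne_zero ht hk h0 h1
  · have h1 : word σ t (k + 1) = 0 := by_contra fun h1 => hiff (iff_of_false h0 h1)
    rw [vacancyCofactor_of_notMem (mt vac.1 h0), zero_sub, mul_neg, ← neg_mul, neg_sub]
    exact bond_term_eq_of_ne_zero_of_eq_zero ht hk h0 h1

end Bonds

theorem master_equation_general (L : ℕ) [NeZero L]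
    (p q : ℝ) (σ : ZMod L → Fin 3)
    (htracer : (univ.filter (fun t : ZMod L => σ t = 2)).card = 1) :
    ∑ i : ZMod L, rate p q (σ (i + 1)) (σ i) * W p q L (swapAt σ i)
      = W p q L σ * ∑ i : ZMod L, rate p q (σ i) (σ (i + 1)) := by
  obtain ⟨t, ht⟩ := card_eq_one.1 htracer
  have ht' : ∀ x, σ x = 2 ↔ x = t := fun x => by simpa using Finset.ext_iff.1 ht x
  have first : vacancyCofactor p q L (word σ t) 0 = 0 :=
    vacancyCofactor_of_notMem (by simp [mem_vacancies])
  have last : vacancyCofactor p q L (word σ t) L = 0 :=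
    vacancyCofactor_of_notMem (by simp [mem_vacancies])
  rw [← sub_eq_zero, sum_zmod_eq_sum_range t, sum_zmod_eq_sum_range t, mul_sum,
    ← sum_sub_distrib, sum_congr rfl fun k hk => bond_term_eq ht' (mem_range.1 hk), ← mul_sum,
    sum_range_sub', first, last, sub_self, mul_zero]

/-- the master equation for the stationary weight `W`:
`∑_i r(σ(i+1), σ(i)) · W(σ^{(i)}) = W(σ) · ∑_i r(σ(i), σ(i+1))`. -/
theorem master_equation (L n : ℕ) [NeZero L] (hL : 2 ≤ L) (hn : n ≤ L - 1)
    (p q : ℝ) (σ : ZMod L → Fin 3)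
    (htracer : (univ.filter (fun t : ZMod L => σ t = 2)).card = 1)
    (hones : (univ.filter (fun i : ZMod L => σ i = 1)).card = n) :
    ∑ i : ZMod L, rate p q (σ (i + 1)) (σ i) * W p q L (swapAt σ i)
      = W p q L σ * ∑ i : ZMod L, rate p q (σ i) (σ (i + 1)) :=
  master_equation_general L p q σ htracer
end

section
/- Let n ≥ 1 and L ≥ n+2 be integers and let p, q be real parameters with p ≠ −1. Then the restricted partition function satisfies the recurrence R(L, n; p, q) = (1 + n·q)·R(L−1, n; p, q) + (1+p)^{L−n−1}·R(L−1, n−1; p/(1+p), q/(1+p)). -/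
open Finset

/-- The stationary weight of a word `a` with entries in `{0,1}` (encoded as `Fin 2`):
the product over positions `i` with `a i = 0` of `1 + p·m_i(a) + q·n_i(a)`,
where `m_i(a)` (resp. `n_i(a)`) is the number of `1`'s strictly before (resp. after) `i`. -/
noncomputable def wt (p q : ℝ) {m : ℕ} (a : Fin m → Fin 2) : ℝ :=
  ∏ i ∈ univ.filter (fun i => a i = 0),
    (1 + p * ((univ.filter (fun j => j < i ∧ a j = 1)).card : ℝ)
       + q * ((univ.filter (fun j => i < j ∧ a j = 1)).card : ℝ))

/-- The number of `1`'s in the word `a`. -/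
def ones {m : ℕ} (a : Fin m → Fin 2) : ℕ := (univ.filter (fun i => a i = 1)).card

/-- The restricted partition function `R(L, n; p, q)`: the sum of the weights `wt p q a`
over all words `a` of length `L - 1` with entries in `{0,1}` having exactly `n` ones. -/
noncomputable def R (L n : ℕ) (p q : ℝ) : ℝ :=
  ∑ a ∈ univ.filter (fun a : Fin (L - 1) → Fin 2 => ones a = n), wt p q a

/-!
Split the words by their first letter. A leading `0` only contributes the factor
`1 + q·n`, where `n` counts the ones after it. A leading `1` raises every `m_i` of the
remaining word by one, and `1 + p(m_i + 1) + q n_i = (1 + p)(1 + (p/(1+p)) m_i + (q/(1+p)) n_i)`,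
so each of the `L - n - 1` remaining zeros contributes a factor `1 + p` and the rest is a
weight with rescaled parameters.
-/

section Counting

variable {α : Type*} [DecidableEq α] {m : ℕ}

lemma card_filter_lt_succ_cons (x c : α) (b : Fin m → α) (i : Fin m) :
    #{j | j < i.succ ∧ (Fin.cons x b : Fin (m + 1) → α) j = c}
      = (if x = c then 1 else 0) + #{j | j < i ∧ b j = c} := by
  rw [card_filter, card_filter, Fin.sum_univ_succ]
  simp [Fin.succ_lt_succ_iff]

lemma card_filter_succ_lt_cons (x c : α) (b : Fin m → α) (i : Fin m) :
    #{j | i.succ < j ∧ (Fin.cons x b : Fin (m + 1) → α) j = c} = #{j | i < j ∧ b j = c} := by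
  rw [card_filter, card_filter, Fin.sum_univ_succ]
  simp [Fin.succ_lt_succ_iff]

lemma card_filter_zero_lt_cons (x c : α) (b : Fin m → α) :
    #{j | 0 < j ∧ (Fin.cons x b : Fin (m + 1) → α) j = c} = #{j | b j = c} := by
  rw [card_filter, card_filter, Fin.sum_univ_succ]
  simp [Fin.succ_pos]

end Counting

lemma ones_cons {m : ℕ} (x : Fin 2) (b : Fin m → Fin 2) :
    ones (Fin.cons x b : Fin (m + 1) → Fin 2) = (if x = 1 then 1 else 0) + ones b := by
  rw [ones, ones, card_filter, card_filter, Fin.sum_univ_succ]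
  simp

lemma card_filter_eq_zero_eq_sub_ones {m : ℕ} (b : Fin m → Fin 2) :
    #{i | b i = 0} = m - ones b := by
  have hsplit := card_filter_add_card_filter_not (s := univ) (fun i => b i = 1)
  have hzero : ∀ i, b i = 0 ↔ ¬b i = 1 := fun i => by
    generalize b i = x
    revert x
    decide
  simp only [card_univ, Fintype.card_fin] at hsplit
  simp only [ones, hzero]
  omega

lemma wt_cons_zero {m : ℕ} (p q : ℝ) (b : Fin m → Fin 2) :
    wt p q (Fin.cons 0 b : Fin (m + 1) → Fin 2) = (1 + q * ones b) * wt p q b := by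
  rw [wt, wt, prod_filter, prod_filter, Fin.prod_univ_succ]
  congr 1
  · simp [card_filter_zero_lt_cons, ones]
  · refine prod_congr rfl fun i _ => ?_
    simp [card_filter_lt_succ_cons, card_filter_succ_lt_cons]

lemma wt_cons_one {m : ℕ} {p : ℝ} (q : ℝ) (hp : 1 + p ≠ 0) (b : Fin m → Fin 2) :
    wt p q (Fin.cons 1 b : Fin (m + 1) → Fin 2)
      = (1 + p) ^ (m - ones b) * wt (p / (1 + p)) (q / (1 + p)) b := by
  have factor : ∀ i : Fin m,
      (if (Fin.cons 1 b : Fin (m + 1) → Fin 2) i.succ = 0 then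
        1 + p * (#{j | j < i.succ ∧ (Fin.cons 1 b : Fin (m + 1) → Fin 2) j = 1} : ℝ)
          + q * (#{j | i.succ < j ∧ (Fin.cons 1 b : Fin (m + 1) → Fin 2) j = 1} : ℝ) else 1)
      = (if b i = 0 then 1 + p else 1) *
        (if b i = 0 then
          1 + p / (1 + p) * (#{j | j < i ∧ b j = 1} : ℝ)
            + q / (1 + p) * (#{j | i < j ∧ b j = 1} : ℝ) else 1) := by
    intro i
    rw [card_filter_lt_succ_cons, card_filter_succ_lt_cons, Fin.cons_succ]
    by_cases hb : b i = 0
    · rw [if_pos hb, if_pos hb, if_pos hb, if_pos rfl]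
      push_cast
      field_simp
      ring
    · rw [if_neg hb, if_neg hb, if_neg hb, one_mul]
  rw [wt, wt, prod_filter, prod_filter, Fin.prod_univ_succ, Fin.cons_zero, if_neg (by decide),
    one_mul, prod_congr rfl fun i _ => factor i, prod_mul_distrib, ← prod_filter, prod_const,
    card_filter_eq_zero_eq_sub_ones]

lemma R_succ (m n : ℕ) (p q : ℝ) :
    R (m + 1) n p q = ∑ a : Fin m → Fin 2, if ones a = n then wt p q a else 0 :=
  sum_filter _ _

lemma sum_fin_two_cons {M : Type*} [AddCommMonoid M] {m : ℕ} (f : (Fin (m + 1) → Fin 2) → M) :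
    ∑ a, f a = ∑ b : Fin m → Fin 2, f (Fin.cons 0 b) + ∑ b : Fin m → Fin 2, f (Fin.cons 1 b) := by
  rw [← (Fin.consEquiv fun _ => Fin 2).sum_comp, Fintype.sum_prod_type, Fin.sum_univ_two]
  rfl

lemma R_succ_succ (m n : ℕ) {p : ℝ} (q : ℝ) (hp : 1 + p ≠ 0) :
    R (m + 2) (n + 1) p q = (1 + (n + 1) * q) * R (m + 1) (n + 1) p q
      + (1 + p) ^ (m - n) * R (m + 1) n (p / (1 + p)) (q / (1 + p)) := by
  rw [R_succ, R_succ, R_succ, sum_fin_two_cons, mul_sum, mul_sum]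
  congr 1 <;> refine sum_congr rfl fun b _ => ?_
  · rw [ones_cons, wt_cons_zero, if_neg zero_ne_one, zero_add]
    split_ifs with h
    · rw [h]
      push_cast
      ring
    · rw [mul_zero]
  · rw [ones_cons, wt_cons_one q hp, if_pos rfl, add_comm]
    simp only [Nat.add_right_cancel_iff]
    split_ifs with h
    · rw [h]
    · rw [mul_zero]

/-- the recurrence for the restricted partition function. -/
theorem R_recurrence (L n : ℕ) (hn : 1 ≤ n) (hL : n + 2 ≤ L) (p q : ℝ) (hp : p ≠ -1) :
    R L n p q = (1 + (n : ℝ) * q) * R (L - 1) n p q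
      + (1 + p) ^ (L - n - 1) * R (L - 1) (n - 1) (p / (1 + p)) (q / (1 + p)) := by
  obtain ⟨k, rfl⟩ : ∃ k, n = k + 1 := ⟨n - 1, by omega⟩
  obtain ⟨m, rfl⟩ : ∃ m, L = m + 2 := ⟨L - 2, by omega⟩
  have hp' : 1 + p ≠ 0 := fun h => hp (by linarith)
  rw [show m + 2 - (k + 1) - 1 = m - k by omega]
  push_cast
  exact R_succ_succ m k q hp'
end

section
/- Let p, q be real parameters with p ≠ q and let x, y be arbitrary real numbers. Then the family (ℓ ↦ (∑_{n=0}^{ℓ} R(ℓ+1, n; p, q)·x^n) · y^ℓ/ℓ!), indexed by ℓ ∈ ℕ, has sum (HasSum) equal to exp( y + x·(exp(p·y) − exp(q·y))/(p−q) ). -/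
open Finset

/-!
A zero preceded by `m` of the `k` ones of a word has weight `1 + p m + q (k - m) = β + m d`
with `β = 1 + q k` and `d = p - q`. Conditioning on the last letter gives a recursion in `(ℓ, k)`
for `R (ℓ + 1) k`, which is also satisfied by `Δ_d^k (t ↦ t ^ ℓ) β / (d ^ k k!)`. Since
`Δ_d (t ↦ e^{t y}) = (e^{d y} - 1) e^{t y}`, the exponential generating function in `y` of the
`k`-th column is `e^{β y} (e^{d y} - 1)^k / (d^k k!) = e^y ((e^{p y} - e^{q y}) / d)^k / k!`,
and summing against `x^k` gives the exponential. The two summations may be interchanged because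
`|R(p, q)| ≤ R(|q| + |d|, |q|)` entrywise, and the double series of the majorant converges by the
same computation.
-/

section FiniteDifferences

variable {K : Type*} [CommRing K]

theorem fwdDiff_iter_succ_apply (h : K) (f : K → K) (n : ℕ) (t : K) :
    (fwdDiff h)^[n + 1] f t = (fwdDiff h)^[n] f (t + h) - (fwdDiff h)^[n] f t := by
  rw [Function.iterate_succ_apply']
  rfl

theorem fwdDiff_iter_succ_id_mul (h : K) (f : K → K) (k : ℕ) (t : K) :
    (fwdDiff h)^[k + 1] (fun s => s * f s) t
      = (t + (k + 1) * h) * (fwdDiff h)^[k + 1] f t + (k + 1) * h * (fwdDiff h)^[k] f t := by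
  induction k generalizing t with
  | zero =>
    simp only [fwdDiff_iter_succ_apply, Function.iterate_zero_apply]
    push_cast
    ring
  | succ k ih =>
    rw [fwdDiff_iter_succ_apply _ _ (k + 1), ih, ih, fwdDiff_iter_succ_apply _ _ (k + 1)]
    push_cast
    linear_combination (-(k : K) - 1) * h * fwdDiff_iter_succ_apply h f k t

theorem fwdDiff_iter_succ_const (h c : K) (k : ℕ) : (fwdDiff h)^[k + 1] (fun _ => c) = 0 := by
  rw [Function.iterate_succ_apply, fwdDiff_const]
  exact Function.iterate_fixed (fwdDiff_const h 0) k

end FiniteDifferences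

theorem fwdDiff_iter_exp_mul (d y : ℝ) (k : ℕ) :
    (fwdDiff d)^[k] (fun t => Real.exp (t * y))
      = fun t => (Real.exp (d * y) - 1) ^ k * Real.exp (t * y) := by
  induction k with
  | zero => simp
  | succ k ih =>
    ext t
    rw [Function.iterate_succ_apply', ih]
    simp only [fwdDiff, add_mul, Real.exp_add]
    ring

theorem hasSum_pow_div_factorial_exp (t : ℝ) :
    HasSum (fun n => t ^ n / n.factorial) (Real.exp t) := by
  rw [Real.exp_eq_exp_ℝ]
  exact NormedSpace.expSeries_div_hasSum_exp t

theorem hasSum_fwdDiff_iter_pow_mul_pow_div_factorial (d β y : ℝ) (k : ℕ) :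
    HasSum (fun ℓ => (fwdDiff d)^[k] (fun t => t ^ ℓ) β * y ^ ℓ / ℓ.factorial)
      ((Real.exp (d * y) - 1) ^ k * Real.exp (β * y)) := by
  rw [← congrFun (fwdDiff_iter_exp_mul d y k) β]
  simp only [fwdDiff_iter_eq_sum_shift, zsmul_eq_mul]
  refine (hasSum_sum fun j _ => (hasSum_pow_div_factorial_exp ((β + j • d) * y)).mul_left
    (((-1 : ℤ) ^ (k - j) * (k.choose j : ℤ) : ℤ) : ℝ)).congr_fun fun ℓ => ?_
  rw [sum_mul, sum_div]
  refine sum_congr rfl fun j _ => ?_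
  rw [mul_pow]
  ring

section Words

variable {K : Type*} [CommRing K]

noncomputable def prefixWeight (α : ℕ → K) {m : ℕ} (a : Fin m → Fin 2) : K :=
  ∏ i, if a i = 0 then α (univ.filter (fun j => j < i ∧ a j = 1)).card else 1

def wordSum (α : ℕ → K) : ℕ → ℕ → K
  | 0, 0 => 1
  | 0, _ + 1 => 0
  | ℓ + 1, 0 => α 0 * wordSum α ℓ 0
  | ℓ + 1, k + 1 => α (k + 1) * wordSum α ℓ (k + 1) + wordSum α ℓ k

theorem ones_snoc {ℓ : ℕ} (b : Fin ℓ → Fin 2) (x : Fin 2) :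
    ones (Fin.snoc b x : Fin (ℓ + 1) → Fin 2) = ones b + if x = 1 then 1 else 0 := by
  unfold ones
  rw [card_filter, card_filter, Fin.sum_univ_castSucc]
  simp [Fin.snoc_castSucc, Fin.snoc_last]

theorem card_filter_lt_castSucc_snoc {ℓ : ℕ} (b : Fin ℓ → Fin 2) (x : Fin 2) (i : Fin ℓ) :
    (univ.filter fun j : Fin (ℓ + 1) =>
        j < i.castSucc ∧ (Fin.snoc b x : Fin (ℓ + 1) → Fin 2) j = 1).card
      = (univ.filter fun j => j < i ∧ b j = 1).card := by
  rw [card_filter, card_filter, Fin.sum_univ_castSucc]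
  simp [Fin.snoc_castSucc, Fin.snoc_last, (Fin.castSucc_lt_last i).asymm]

theorem card_filter_lt_last_snoc {ℓ : ℕ} (b : Fin ℓ → Fin 2) (x : Fin 2) :
    (univ.filter fun j : Fin (ℓ + 1) =>
        j < Fin.last ℓ ∧ (Fin.snoc b x : Fin (ℓ + 1) → Fin 2) j = 1).card
      = ones b := by
  unfold ones
  rw [card_filter, card_filter, Fin.sum_univ_castSucc]
  simp [Fin.snoc_castSucc, Fin.snoc_last, Fin.castSucc_lt_last]

theorem prefixWeight_snoc (α : ℕ → K) {ℓ : ℕ} (b : Fin ℓ → Fin 2) (x : Fin 2) :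
    prefixWeight α (Fin.snoc b x : Fin (ℓ + 1) → Fin 2)
      = prefixWeight α b * if x = 0 then α (ones b) else 1 := by
  unfold prefixWeight
  rw [Fin.prod_univ_castSucc, card_filter_lt_last_snoc]
  simp only [card_filter_lt_castSucc_snoc, Fin.snoc_castSucc, Fin.snoc_last]

theorem sum_prefixWeight_eq_wordSum (α : ℕ → K) (ℓ k : ℕ) :
    ∑ a ∈ univ.filter (fun a : Fin ℓ → Fin 2 => ones a = k), prefixWeight α a
      = wordSum α ℓ k := by
  induction ℓ generalizing k with
  | zero => cases k <;> simp [wordSum, prefixWeight, ones]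
  | succ ℓ ih =>
    rw [sum_filter, ← (Fin.snocEquiv fun _ => Fin 2).sum_comp, Fintype.sum_prod_type,
      Fin.sum_univ_two]
    simp only [Fin.snocEquiv, Equiv.coe_fn_mk, ones_snoc, prefixWeight_snoc]
    cases k <;> simp +contextual [wordSum, ← ih, sum_filter, mul_sum, mul_comm]

theorem wordSum_affine_eq_fwdDiff_iter (β d : K) (ℓ k : ℕ) :
    d ^ k * k.factorial * wordSum (fun l => β + l * d) ℓ k
      = (fwdDiff d)^[k] (fun t => t ^ ℓ) β := by
  induction ℓ generalizing k with
  | zero =>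
    cases k with
    | zero => simp [wordSum]
    | succ k => simp [wordSum, fwdDiff_iter_succ_const]
  | succ ℓ ih =>
    cases k with
    | zero => simpa [wordSum, pow_succ'] using congrArg (β * ·) (ih 0)
    | succ k =>
      simp only [pow_succ', fwdDiff_iter_succ_id_mul, ← ih, wordSum, Nat.factorial_succ]
      push_cast
      ring

end Words

theorem abs_wordSum_le {K : Type*} [CommRing K] [LinearOrder K] [IsStrictOrderedRing K]
    {α α' : ℕ → K} (h : ∀ l, |α l| ≤ α' l) (ℓ k : ℕ) :
    |wordSum α ℓ k| ≤ wordSum α' ℓ k := by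
  induction ℓ generalizing k with
  | zero => cases k <;> simp [wordSum]
  | succ ℓ ih =>
    cases k with
    | zero =>
      rw [wordSum, wordSum, abs_mul]
      exact mul_le_mul (h 0) (ih 0) (abs_nonneg _) ((abs_nonneg _).trans (h 0))
    | succ k =>
      rw [wordSum, wordSum]
      calc _ ≤ |α (k + 1)| * |wordSum α ℓ (k + 1)| + |wordSum α ℓ k| := by
            rw [← abs_mul]; exact abs_add_le _ _
        _ ≤ _ := by
          gcongr
          · exact (abs_nonneg _).trans (h _)
          · exact h _
          · exact ih _
          · exact ih _

theorem ones_eq_card_filter_lt_add_card_filter_gt {m : ℕ} (a : Fin m → Fin 2) {i : Fin m}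
    (hi : a i = 0) :
    ones a = (univ.filter fun j => j < i ∧ a j = 1).card
      + (univ.filter fun j => i < j ∧ a j = 1).card := by
  unfold ones
  rw [card_filter, card_filter, card_filter, ← sum_add_distrib]
  refine sum_congr rfl fun j _ => ?_
  rcases lt_trichotomy j i with hj | rfl | hj
  · simp [hj, hj.asymm]
  · simp [hi]
  · simp [hj, hj.asymm]

theorem wt_eq_prefixWeight (p q : ℝ) {m : ℕ} (a : Fin m → Fin 2) :
    wt p q a = prefixWeight (fun l => 1 + q * ones a + l * (p - q)) a := by
  unfold wt prefixWeight
  rw [prod_filter]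
  refine prod_congr rfl fun i _ => ?_
  split_ifs with hi
  · rw [ones_eq_card_filter_lt_add_card_filter_gt a hi]
    push_cast
    ring
  · rfl

theorem R_succ_eq_wordSum (p q : ℝ) (ℓ k : ℕ) :
    R (ℓ + 1) k p q = wordSum (fun l => 1 + q * k + l * (p - q)) ℓ k := by
  rw [← sum_prefixWeight_eq_wordSum]
  refine sum_congr rfl fun a ha => ?_
  rw [wt_eq_prefixWeight, (mem_filter.1 ha).2]

theorem R_succ_eq_zero_of_lt (p q : ℝ) {ℓ k : ℕ} (h : ℓ < k) : R (ℓ + 1) k p q = 0 := by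
  refine sum_eq_zero fun a ha => absurd (mem_filter.1 ha).2 (ne_of_lt ?_)
  exact (card_filter_le _ _).trans_lt (by simpa using h)

theorem R_succ_eq_fwdDiff_iter (p q : ℝ) (ℓ k : ℕ) :
    (p - q) ^ k * k.factorial * R (ℓ + 1) k p q
      = (fwdDiff (p - q))^[k] (fun t => t ^ ℓ) (1 + q * k) := by
  rw [R_succ_eq_wordSum, wordSum_affine_eq_fwdDiff_iter]

theorem Summable.hasSum_of_fiberwise {α β γ : Type*} [AddCommMonoid α] [TopologicalSpace α]
    [ContinuousAdd α] [T3Space α] {f : β × γ → α} (hf : Summable f)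
    {g : β → α} {h : γ → α} {a : α} (hg : ∀ b, HasSum (fun c => f (b, c)) (g b))
    (ha : HasSum g a) (hh : ∀ c, HasSum (fun b => f (b, c)) (h c)) : HasSum h a := by
  have hfa : HasSum f a := (hf.hasSum.prod_fiberwise hg).unique ha ▸ hf.hasSum
  exact ((Equiv.prodComm γ β).hasSum_iff.2 hfa).prod_fiberwise hh

noncomputable def egfTerm (p q x y : ℝ) (kl : ℕ × ℕ) : ℝ :=
  x ^ kl.1 * R (kl.2 + 1) kl.1 p q * y ^ kl.2 / kl.2.factorial

theorem hasSum_egfTerm_fst {p q : ℝ} (hpq : p ≠ q) (x y : ℝ) (k : ℕ) :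
    HasSum (fun ℓ => egfTerm p q x y (k, ℓ))
      (Real.exp y * (x * (Real.exp (p * y) - Real.exp (q * y)) / (p - q)) ^ k / k.factorial) := by
  have hd : p - q ≠ 0 := sub_ne_zero.2 hpq
  have hexp : Real.exp ((1 + q * k) * y) = Real.exp y * Real.exp (q * y) ^ k := by
    rw [← Real.exp_nat_mul, ← Real.exp_add]
    ring_nf
  have hdiff : (Real.exp ((p - q) * y) - 1) * Real.exp (q * y)
      = Real.exp (p * y) - Real.exp (q * y) := by
    rw [sub_mul, ← Real.exp_add]
    ring_nf
  have hval : Real.exp y * (x * (Real.exp (p * y) - Real.exp (q * y)) / (p - q)) ^ k / k.factorial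
      = x ^ k / ((p - q) ^ k * k.factorial)
        * ((Real.exp ((p - q) * y) - 1) ^ k * Real.exp ((1 + q * k) * y)) := by
    rw [hexp, ← hdiff, div_pow, mul_pow, mul_pow]
    field_simp
  rw [hval]
  refine ((hasSum_fwdDiff_iter_pow_mul_pow_div_factorial _ _ y k).mul_left _).congr_fun
    fun ℓ => ?_
  rw [← R_succ_eq_fwdDiff_iter, egfTerm]
  field_simp

theorem hasSum_egfTerm_snd (p q x y : ℝ) (ℓ : ℕ) :
    HasSum (fun k => egfTerm p q x y (k, ℓ))
      ((∑ n ∈ range (ℓ + 1), R (ℓ + 1) n p q * x ^ n) * y ^ ℓ / ℓ.factorial) := by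
  have hval : (∑ n ∈ range (ℓ + 1), R (ℓ + 1) n p q * x ^ n) * y ^ ℓ / ℓ.factorial
      = ∑ k ∈ range (ℓ + 1), egfTerm p q x y (k, ℓ) := by
    rw [sum_mul, sum_div]
    exact sum_congr rfl fun k _ => by rw [egfTerm]; ring
  rw [hval]
  refine hasSum_sum_of_ne_finset_zero fun k hk => ?_
  rw [egfTerm, R_succ_eq_zero_of_lt p q (by simpa using hk)]
  simp

theorem abs_egfTerm_le (p q x y : ℝ) (kl : ℕ × ℕ) :
    |egfTerm p q x y kl| ≤ egfTerm (|q| + |p - q|) |q| |x| |y| kl := by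
  have hα : ∀ l : ℕ,
      |1 + q * kl.1 + l * (p - q)| ≤ 1 + |q| * kl.1 + l * (|q| + |p - q| - |q|) := by
    intro l
    refine (abs_add_le _ _).trans ((add_le_add (abs_add_le _ _) le_rfl).trans (le_of_eq ?_))
    simp only [abs_one, abs_mul, Nat.abs_cast]
    ring
  have hR := abs_wordSum_le hα kl.2 kl.1
  simp only [egfTerm, R_succ_eq_wordSum, abs_div, abs_mul, abs_pow, Nat.abs_cast]
  gcongr

theorem summable_egfTerm {p q : ℝ} (hpq : p ≠ q) (x y : ℝ) : Summable (egfTerm p q x y) := by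
  have hpq' : |q| + |p - q| ≠ |q| := by simpa using sub_ne_zero.2 hpq
  have hnonneg : 0 ≤ egfTerm (|q| + |p - q|) |q| |x| |y| :=
    fun kl => (abs_nonneg _).trans (abs_egfTerm_le p q x y kl)
  refine Summable.of_norm_bounded ((summable_prod_of_nonneg hnonneg).2 ⟨fun k =>
    (hasSum_egfTerm_fst hpq' _ _ k).summable, ?_⟩) (abs_egfTerm_le p q x y)
  simp_rw [(hasSum_egfTerm_fst hpq' _ _ _).tsum_eq, mul_div_assoc]
  exact (Real.summable_pow_div_factorial _).mul_left _

/-- the mixed bivariate generating function of the restricted partition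
function. -/
theorem R_bivariate_egf (p q : ℝ) (hpq : p ≠ q) (x y : ℝ) :
    HasSum
      (fun ℓ : ℕ =>
        (∑ n ∈ Finset.range (ℓ + 1), R (ℓ + 1) n p q * x ^ n) * y ^ ℓ / (ℓ.factorial : ℝ))
      (Real.exp (y + x * (Real.exp (p * y) - Real.exp (q * y)) / (p - q))) := by
  refine (summable_egfTerm hpq x y).hasSum_of_fiberwise (hasSum_egfTerm_fst hpq x y) ?_
    (hasSum_egfTerm_snd p q x y)
  rw [Real.exp_add]
  simpa only [mul_div_assoc] using (hasSum_pow_div_factorial_exp _).mul_left (Real.exp y)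
end

section
/- Let p be a nonzero real parameter and let L > n ≥ 0 be integers. Then the restricted partition function at q = 0 is given by R(L, n; p, 0) = p^{L−n−1} · S_{1/p}(L, n+1). -/
open Finset

/-- The `p`-weighted Stirling number `S_p(m, k)`: the sum over all set partitions of
`{1, …, m}` (encoded as `Fin m`) into exactly `k` nonempty blocks of
`p ^ (size of the block containing the first element, minus one)`. -/
noncomputable def pStirling (p : ℝ) (m k : ℕ) : ℝ :=
  if h : 0 < m then
    ∑ P ∈ univ.filter
        (fun P : Finpartition (univ : Finset (Fin m)) => P.parts.card = k),
      p ^ ((P.part (⟨0, h⟩ : Fin m)).card - 1)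
  else 0

/-!
At `q = 0` the factor `1 + p·m_i` of the weight of a word is a sum over the ways to attach the
zero at position `i` to a block: to the block of the first element (weight `1`), or to one of
the `m_i` blocks opened by the ones before it (weight `p`). A word with `n` ones together with
such choices is a set partition of `{0, …, L-1}` into `n + 1` blocks, recorded by the map sending
each element to the minimum of its block; the minima are `0` and the successors of the ones.
The weight of the partition is `p` to the number of elements that are neither minima nor in the
block of `0`, that is `p^(L-n-1) · (1/p)^(|B₁|-1)`.
-/

namespace Finpartition

section

variable {α β : Type*} [Fintype α] [DecidableEq α]

lemma parts_eq_image_part (P : Finpartition (univ : Finset α)) :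
    P.parts = univ.image P.part := by
  ext t
  refine ⟨fun ht => ?_, fun ht => ?_⟩
  · obtain ⟨x, hx⟩ := P.nonempty_of_mem_parts ht
    exact mem_image.2 ⟨x, mem_univ x, P.part_eq_of_mem ht hx⟩
  · obtain ⟨x, -, rfl⟩ := mem_image.1 ht
    exact P.part_mem.2 (mem_univ x)

noncomputable def ofKer (g : α → β) : Finpartition (univ : Finset α) := by
  classical exact ofSetoid (Setoid.ker g)

lemma mem_part_ofKer {g : α → β} {x y : α} : y ∈ (ofKer g).part x ↔ g x = g y := by
  classical exact mem_part_ofSetoid_iff_rel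

lemma ofKer_eq {g : α → β} {P : Finpartition (univ : Finset α)}
    (h : ∀ x y, g x = g y ↔ y ∈ P.part x) : ofKer g = P := by
  apply Finpartition.ext
  rw [parts_eq_image_part, parts_eq_image_part]
  exact image_congr fun x _ => by ext y; rw [mem_part_ofKer, h]

end

section LinearOrder

variable {α : Type*} [Fintype α] [LinearOrder α] (P : Finpartition (univ : Finset α))

def blockMin (x : α) : α := (P.part x).min' ⟨x, P.mem_part (mem_univ x)⟩

lemma blockMin_mem_part (x : α) : P.blockMin x ∈ P.part x := min'_mem _ _

lemma blockMin_le (x : α) : P.blockMin x ≤ x := min'_le _ _ (P.mem_part (mem_univ x))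

lemma part_blockMin (x : α) : P.part (P.blockMin x) = P.part x :=
  P.part_eq_of_mem (P.part_mem.2 (mem_univ x)) (P.blockMin_mem_part x)

lemma blockMin_eq_blockMin_iff {x y : α} : P.blockMin x = P.blockMin y ↔ y ∈ P.part x := by
  refine ⟨fun h => ?_, fun h => ?_⟩
  · rw [mem_part_iff_part_eq_part _ (mem_univ y) (mem_univ x), ← P.part_blockMin y, ← h,
      P.part_blockMin]
  · simp only [blockMin, P.part_eq_of_mem (P.part_mem.2 (mem_univ x)) h]

lemma blockMin_blockMin (x : α) : P.blockMin (P.blockMin x) = P.blockMin x :=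
  P.blockMin_eq_blockMin_iff.2 (by rw [P.part_blockMin]; exact P.mem_part (mem_univ x))

lemma card_filter_blockMin_eq_self : #{x | P.blockMin x = x} = #P.parts := by
  refine card_bij (fun x _ => P.part x) (fun x _ => P.part_mem.2 (mem_univ x)) ?_ ?_
  · intro x hx y hy hxy
    rw [mem_filter] at hx hy
    rw [← hx.2, ← hy.2, P.blockMin_eq_blockMin_iff, hxy]
    exact P.mem_part (mem_univ y)
  · intro t ht
    obtain ⟨x, hx⟩ := P.nonempty_of_mem_parts ht
    exact ⟨P.blockMin x, mem_filter.2 ⟨mem_univ _, P.blockMin_blockMin x⟩,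
      by rw [P.part_blockMin, P.part_eq_of_mem ht hx]⟩

lemma ofKer_blockMin : ofKer P.blockMin = P :=
  ofKer_eq fun _ _ => P.blockMin_eq_blockMin_iff

variable {g : α → α} (hle : ∀ x, g x ≤ x) (hidem : ∀ x, g (g x) = g x)
include hle hidem

lemma blockMin_ofKer : (ofKer g).blockMin = g := by
  funext x
  refine le_antisymm (min'_le _ _ ?_) (le_min' _ _ _ fun y hy => ?_)
  · rw [mem_part_ofKer, hidem]
  · rw [mem_part_ofKer] at hy
    exact hy ▸ hle y

lemma card_parts_ofKer : #(ofKer g).parts = #{x | g x = x} := by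
  rw [← card_filter_blockMin_eq_self, blockMin_ofKer hle hidem]

end LinearOrder

end Finpartition

namespace RestrictedPartition

open Finpartition Fintype

variable {M : ℕ} (a : Fin M → Fin 2)

-- Position `j` of a word is the element `j.succ` of `Fin (M + 1)`, and `0` is an extra first
-- element; the roots are the minima of the blocks.
def roots : Finset (Fin (M + 1)) := insert 0 (({j | a j = 1} : Finset (Fin M)).map (Fin.succEmb M))

lemma zero_mem_roots : 0 ∈ roots a := mem_insert_self _ _

lemma succ_mem_roots_iff (j : Fin M) : j.succ ∈ roots a ↔ a j = 1 := by
  simp [roots, Fin.succ_ne_zero]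

lemma card_roots : #(roots a) = ones a + 1 := by
  rw [roots, card_insert_of_notMem (by simp [Fin.succ_ne_zero]), card_map, ones]

def rootChoices (x : Fin (M + 1)) : Finset (Fin (M + 1)) :=
  if x ∈ roots a then {x} else {r ∈ roots a | r < x}

lemma mem_rootChoices {x r : Fin (M + 1)} :
    r ∈ rootChoices a x ↔ r ∈ roots a ∧ r ≤ x ∧ (x ∈ roots a → r = x) := by
  unfold rootChoices
  split_ifs with hx
  · rw [mem_singleton]
    exact ⟨fun h => ⟨h ▸ hx, h.le, fun _ => h⟩, fun h => h.2.2 hx⟩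
  · rw [mem_filter]
    exact ⟨fun h => ⟨h.1, h.2.le, fun h' => absurd h' hx⟩,
      fun h => ⟨h.1, h.2.1.lt_of_ne fun hrx => hx (hrx ▸ h.1)⟩⟩

lemma mem_piFinset_rootChoices {g : Fin (M + 1) → Fin (M + 1)} :
    g ∈ piFinset (rootChoices a) ↔
      (∀ x, g x ≤ x) ∧ (∀ x, g (g x) = g x) ∧ ∀ x, g x = x ↔ x ∈ roots a := by
  simp only [mem_piFinset, mem_rootChoices]
  refine ⟨fun h => ⟨fun x => (h x).2.1, fun x => (h (g x)).2.2 (h x).1,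
    fun x => ⟨fun hx => hx ▸ (h x).1, (h x).2.2⟩⟩, fun ⟨hle, hidem, hfix⟩ x => ?_⟩
  exact ⟨(hfix (g x)).1 (hidem x), hle x, (hfix x).2⟩

noncomputable def attachWeight (p : ℝ) (x r : Fin (M + 1)) : ℝ := if r = 0 ∨ r = x then 1 else p

lemma sum_attachWeight_rootChoices_of_mem (p : ℝ) {x : Fin (M + 1)} (hx : x ∈ roots a) :
    ∑ r ∈ rootChoices a x, attachWeight p x r = 1 := by
  rw [rootChoices, if_pos hx, sum_singleton, attachWeight, if_pos (Or.inr rfl)]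

lemma sum_attachWeight_rootChoices_succ (p : ℝ) {i : Fin M} (hi : a i = 0) :
    ∑ r ∈ rootChoices a i.succ, attachWeight p i.succ r = 1 + p * #{j | j < i ∧ a j = 1} := by
  have hroots : {r ∈ roots a | r < i.succ}
      = insert 0 (({j | j < i ∧ a j = 1} : Finset (Fin M)).map (Fin.succEmb M)) := by
    ext r
    cases r using Fin.cases <;> simp [roots, Fin.succ_ne_zero, and_comm]
  have hnot : i.succ ∉ roots a := by simp [succ_mem_roots_iff, hi]
  rw [rootChoices, if_neg hnot, hroots, sum_insert (by simp [Fin.succ_ne_zero]), sum_map]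
  have hlink : ∀ j ∈ ({j | j < i ∧ a j = 1} : Finset (Fin M)),
      attachWeight p i.succ (Fin.succEmb M j) = p := fun j hj => by
    rw [mem_filter] at hj
    simp [attachWeight, Fin.succ_ne_zero, hj.2.1.ne]
  rw [sum_congr rfl hlink, sum_const, nsmul_eq_mul, mul_comm, attachWeight, if_pos (Or.inl rfl)]

lemma wt_zero_eq_sum_piFinset (p : ℝ) :
    wt p 0 a = ∑ g ∈ piFinset (rootChoices a), ∏ x, attachWeight p x (g x) := by
  rw [← prod_univ_sum, Fin.prod_univ_succ,
    sum_attachWeight_rootChoices_of_mem a p (zero_mem_roots a), one_mul, wt, prod_filter]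
  refine prod_congr rfl fun i _ => ?_
  split_ifs with hi
  · rw [sum_attachWeight_rootChoices_succ a p hi, zero_mul, add_zero]
  · exact (sum_attachWeight_rootChoices_of_mem a p
      ((succ_mem_roots_iff a i).2 (Fin.eq_one_of_ne_zero _ hi))).symm

def wordOf (P : Finpartition (univ : Finset (Fin (M + 1)))) (j : Fin M) : Fin 2 :=
  if P.blockMin j.succ = j.succ then 1 else 0

lemma mem_roots_wordOf (P : Finpartition (univ : Finset (Fin (M + 1)))) {x : Fin (M + 1)} :
    x ∈ roots (wordOf P) ↔ P.blockMin x = x := by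
  cases x using Fin.cases with
  | zero => simp only [zero_mem_roots, ← Fin.le_zero_iff, P.blockMin_le]
  | succ j => rw [succ_mem_roots_iff, wordOf]; split_ifs <;> simp_all

lemma blockMin_mem_piFinset_rootChoices (P : Finpartition (univ : Finset (Fin (M + 1)))) :
    P.blockMin ∈ piFinset (rootChoices (wordOf P)) :=
  (mem_piFinset_rootChoices _).2
    ⟨P.blockMin_le, P.blockMin_blockMin, fun _ => (mem_roots_wordOf P).symm⟩

lemma ones_wordOf (P : Finpartition (univ : Finset (Fin (M + 1)))) :
    ones (wordOf P) + 1 = #P.parts := by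
  rw [← card_roots, ← card_filter_blockMin_eq_self]
  congr 1
  ext x
  rw [mem_filter, mem_roots_wordOf, and_iff_right (mem_univ x)]

lemma card_filter_not_zero_or_fixed_add {g : Fin (M + 1) → Fin (M + 1)} (hg0 : g 0 = 0) :
    #{x | ¬(g x = 0 ∨ g x = x)} + #{x | g x = 0} + #{x | g x = x} = M + 2 := by
  have hinter : ({x | g x = 0 ∧ g x = x} : Finset (Fin (M + 1))) = {0} := by
    ext x
    simp only [mem_filter, mem_univ, true_and, mem_singleton]
    exact ⟨fun h => h.2 ▸ h.1, by rintro rfl; exact ⟨hg0, hg0⟩⟩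
  have hcompl := card_filter_add_card_filter_not (s := univ) (fun x => g x = 0 ∨ g x = x)
  have hunion := card_union_add_card_inter
    ({x | g x = 0} : Finset (Fin (M + 1))) {x | g x = x}
  rw [← filter_or, ← filter_and, hinter, card_singleton] at hunion
  rw [card_univ, Fintype.card_fin] at hcompl
  omega

variable {a} {g : Fin (M + 1) → Fin (M + 1)} (hg : g ∈ piFinset (rootChoices a))
include hg

lemma blockMin_ofKer_of_mem_piFinset : (ofKer g).blockMin = g :=
  have ⟨hle, hidem, _⟩ := (mem_piFinset_rootChoices a).1 hg
  blockMin_ofKer hle hidem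

lemma card_filter_fixed_of_mem_piFinset : #{x | g x = x} = ones a + 1 := by
  obtain ⟨-, -, hfix⟩ := (mem_piFinset_rootChoices a).1 hg
  rw [← card_roots]
  congr 1
  ext x
  rw [mem_filter, hfix, and_iff_right (mem_univ x)]

lemma card_parts_ofKer_of_mem_piFinset : #(ofKer g).parts = ones a + 1 := by
  obtain ⟨hle, hidem, -⟩ := (mem_piFinset_rootChoices a).1 hg
  rw [card_parts_ofKer hle hidem, card_filter_fixed_of_mem_piFinset hg]

lemma wordOf_ofKer : wordOf (ofKer g) = a := by
  obtain ⟨-, -, hfix⟩ := (mem_piFinset_rootChoices a).1 hg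
  funext j
  simp only [wordOf, blockMin_ofKer_of_mem_piFinset hg, hfix, succ_mem_roots_iff]
  split_ifs with h
  · exact h.symm
  · omega

lemma prod_attachWeight {p : ℝ} (hp : p ≠ 0) :
    ∏ x, attachWeight p x (g x) = p ^ (M - ones a) * (1 / p) ^ (#((ofKer g).part 0) - 1) := by
  have hg0 : g 0 = 0 := ((mem_piFinset_rootChoices a).1 hg).2.2 0 |>.2 (zero_mem_roots a)
  have hpart0 : (ofKer g).part 0 = ({y | g y = 0} : Finset (Fin (M + 1))) := by
    ext y
    rw [mem_part_ofKer, hg0, mem_filter, eq_comm, and_iff_right (mem_univ y)]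
  have hblock0 : 0 < #{y | g y = 0} := card_pos.2 ⟨0, mem_filter.2 ⟨mem_univ 0, hg0⟩⟩
  have hcount := card_filter_not_zero_or_fixed_add hg0
  rw [card_filter_fixed_of_mem_piFinset hg] at hcount
  have hexp : M - ones a = #{x | ¬(g x = 0 ∨ g x = x)} + (#{y | g y = 0} - 1) := by omega
  simp only [attachWeight]
  rw [prod_ite, prod_const_one, one_mul, prod_const, hpart0, hexp, pow_add, one_div, inv_pow,
    mul_assoc, mul_inv_cancel₀ (pow_ne_zero _ hp), mul_one]

end RestrictedPartition

open Finpartition RestrictedPartition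

/-- at `q = 0` the restricted partition function is expressed via the
`1/p`-weighted Stirling numbers. -/
theorem R_q_zero (L n : ℕ) (h : n < L) (p : ℝ) (hp : p ≠ 0) :
    R L n p 0 = p ^ (L - n - 1) * pStirling (1 / p) L (n + 1) := by
  obtain ⟨M, rfl⟩ : ∃ M, L = M + 1 := ⟨L - 1, by omega⟩
  rw [show M + 1 - n - 1 = M - n by omega, pStirling, dif_pos M.succ_pos, Fin.zero_eta, mul_sum,
    R, Nat.add_sub_cancel]
  simp only [wt_zero_eq_sum_piFinset]
  rw [Finset.sum_sigma']
  refine sum_nbij' (fun s => ofKer s.2) (fun P => ⟨wordOf P, P.blockMin⟩) ?_ ?_ ?_ ?_ ?_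
  · rintro ⟨a, g⟩ hs
    simp only [mem_sigma, mem_filter, mem_univ, true_and] at hs ⊢
    rw [card_parts_ofKer_of_mem_piFinset hs.2, hs.1]
  · intro P hP
    simp only [mem_sigma, mem_filter, mem_univ, true_and] at hP ⊢
    exact ⟨by have := ones_wordOf P; omega, blockMin_mem_piFinset_rootChoices P⟩
  · rintro ⟨a, g⟩ hs
    rw [mem_sigma] at hs
    exact Sigma.ext (wordOf_ofKer hs.2) (heq_of_eq (blockMin_ofKer_of_mem_piFinset hs.2))
  · intro P _
    exact ofKer_blockMin P
  · rintro ⟨a, g⟩ hs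
    rw [mem_sigma, mem_filter] at hs
    rw [prod_attachWeight hs.2 hp, hs.1.2]
end

section
/- Let L ≥ 3 and 1 ≤ n ≤ L−2 be integers and let p, q be real parameters. Then ∑_{k=1}^{L−2} ( ∑_{a : a_k = 1, a_{k+1} = 0} w_{p,q}(a) − ∑_{a : a_k = 0, a_{k+1} = 1} w_{p,q}(a) ) = (p − q) · n · R(L−1, n; p, q), where the inner sums run over words a of length L−1 with entries in {0,1} having exactly n ones and the prescribed values at positions k and k+1. (This identity says that the stationary current of ordinary particles equals (p−q)·n·R(L−1,n;p,q)/Z_{L,n}, where Z_{L,n} = L·R(L,n;p,q).) -/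
open Finset

/-!
Deleting a `0` from a word changes no count `m_i, n_i` of the remaining positions, so its weight
is the weight of the shorter word times the factor `1 + p m + q n` of the deleted position.
A word with `10` at positions `k, k + 1` and the word with `01` there both reduce to the same word
`b` with `b k = 1`, and the two deleted factors differ by exactly `p - q`: the `1` is after
the `0` in one case and before it in the other. Summing over `k` counts each word `b` once per
`1` it contains, which gives the factor `n`.
-/

def insertZero {m : ℕ} (j : Fin (m + 1)) (b : Fin m → Fin 2) : Fin (m + 1) → Fin 2 :=
  j.insertNth 0 b

section InsertZero

variable {m : ℕ} (j : Fin (m + 1)) (b : Fin m → Fin 2)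

@[simp] lemma insertZero_same : insertZero j b j = 0 :=
  Fin.insertNth_apply_same (α := fun _ => Fin 2) j 0 b

@[simp] lemma insertZero_succAbove (i : Fin m) : insertZero j b (j.succAbove i) = b i :=
  Fin.insertNth_apply_succAbove (α := fun _ => Fin 2) j 0 b i

lemma removeNth_insertZero : j.removeNth (insertZero j b) = b :=
  Fin.removeNth_insertNth (α := fun _ => Fin 2) j 0 b

lemma insertZero_removeNth {a : Fin (m + 1) → Fin 2} (ha : a j = 0) :
    insertZero j (j.removeNth a) = a := by
  have h := Fin.insertNth_self_removeNth j a
  rwa [ha] at h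

lemma card_filter_insertZero_eq_one (P : Fin (m + 1) → Prop) [DecidablePred P] :
    #{l | P l ∧ insertZero j b l = 1} = #{i | P (j.succAbove i) ∧ b i = 1} := by
  simp only [card_filter]
  rw [Fin.sum_univ_succAbove _ j]
  simp

lemma ones_insertZero : ones (insertZero j b) = ones b := by
  simpa [ones] using card_filter_insertZero_eq_one j b (fun _ => True)

lemma wt_insertZero (p q : ℝ) :
    wt p q (insertZero j b)
      = (1 + p * #{i | j.succAbove i < j ∧ b i = 1} + q * #{i | j < j.succAbove i ∧ b i = 1})
        * wt p q b := by
  simp only [wt, prod_filter]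
  rw [Fin.prod_univ_succAbove _ j]
  simp [card_filter_insertZero_eq_one, Fin.succAbove_lt_succAbove_iff]

lemma sum_filter_eq_sum_insertZero {M : Type*} [AddCommMonoid M] (f : (Fin (m + 1) → Fin 2) → M)
    (P : (Fin (m + 1) → Fin 2) → Prop) [DecidablePred P]
    (Q : (Fin m → Fin 2) → Prop) [DecidablePred Q]
    (hPQ : ∀ b, P (insertZero j b) ↔ Q b) (hP : ∀ a, P a → a j = 0) :
    ∑ a with P a, f a = ∑ b with Q b, f (insertZero j b) := by
  refine sum_nbij' j.removeNth (insertZero j) ?_ ?_ ?_ ?_ ?_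
  · intro a ha
    simp only [mem_filter, mem_univ, true_and] at ha ⊢
    rwa [← hPQ, insertZero_removeNth j (hP a ha)]
  · intro b hb
    simpa [hPQ] using hb
  · intro a ha
    exact insertZero_removeNth j (hP a (mem_filter.1 ha).2)
  · intro b _
    exact removeNth_insertZero j b
  · intro a ha
    rw [insertZero_removeNth j (hP a (mem_filter.1 ha).2)]

end InsertZero

lemma card_filter_le_and {α : Type*} [Fintype α] [LinearOrder α] (P : α → Prop) [DecidablePred P]
    {k : α} (hk : P k) : #{i | i ≤ k ∧ P i} = #{i | i < k ∧ P i} + 1 := by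
  rw [← card_insert_of_notMem (s := {i | i < k ∧ P i}) (a := k) (by simp)]
  congr 1
  ext i
  simp only [mem_filter, mem_univ, true_and, mem_insert, le_iff_lt_or_eq]
  aesop

lemma card_filter_ge_and {α : Type*} [Fintype α] [LinearOrder α] (P : α → Prop) [DecidablePred P]
    {k : α} (hk : P k) : #{i | k ≤ i ∧ P i} = #{i | k < i ∧ P i} + 1 :=
  card_filter_le_and (α := αᵒᵈ) (fun i => P (OrderDual.ofDual i)) hk

lemma sum_filter_one_zero_sub_sum_filter_zero_one {m : ℕ} (n : ℕ) (p q : ℝ) (k : Fin m) :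
    ∑ a : Fin (m + 1) → Fin 2 with ones a = n ∧ a k.castSucc = 1 ∧ a k.succ = 0, wt p q a
      - ∑ a : Fin (m + 1) → Fin 2 with ones a = n ∧ a k.castSucc = 0 ∧ a k.succ = 1, wt p q a
    = (p - q) * ∑ b : Fin m → Fin 2 with ones b = n ∧ b k = 1, wt p q b := by
  have hsucc (b : Fin m → Fin 2) : insertZero k.succ b k.castSucc = b k := by
    rw [← Fin.succAbove_succ_self k, insertZero_succAbove]
  have hcastSucc (b : Fin m → Fin 2) : insertZero k.castSucc b k.succ = b k := by
    rw [← Fin.succAbove_castSucc_self k, insertZero_succAbove]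
  rw [sum_filter_eq_sum_insertZero k.succ _ _ (fun b => ones b = n ∧ b k = 1)
      (by simp [ones_insertZero, hsucc]) (fun _ h => h.2.2),
    sum_filter_eq_sum_insertZero k.castSucc _ _ (fun b => ones b = n ∧ b k = 1)
      (by simp [ones_insertZero, hcastSucc]) (fun _ h => h.2.1),
    ← sum_sub_distrib, mul_sum]
  refine sum_congr rfl fun b hb => ?_
  have hbk : b k = 1 := (mem_filter.1 hb).2.2
  simp only [wt_insertZero, Fin.succAbove_lt_iff_castSucc_lt, Fin.lt_succAbove_iff_le_castSucc,
    Fin.castSucc_lt_succ_iff, Fin.castSucc_lt_castSucc_iff, Fin.succ_lt_succ_iff,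
    Fin.le_castSucc_iff]
  rw [card_filter_le_and (fun i => b i = 1) hbk, card_filter_ge_and (fun i => b i = 1) hbk]
  push_cast
  ring

lemma sum_sum_filter_ones_eq_and_eq_one {m : ℕ} {M : Type*} [AddCommMonoid M] (n : ℕ)
    (f : (Fin m → Fin 2) → M) :
    ∑ k, ∑ b with ones b = n ∧ b k = 1, f b = n • ∑ b with ones b = n, f b := by
  have h (k : Fin m) : ∑ b with ones b = n ∧ b k = 1, f b
      = ∑ b with ones b = n, if b k = 1 then f b else 0 := by
    rw [← filter_filter, sum_filter]
  simp_rw [h]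
  rw [sum_comm, smul_sum]
  refine sum_congr rfl fun b hb => ?_
  rw [← sum_filter, sum_const, ← (mem_filter.1 hb).2]
  rfl

/-- the identity giving the stationary current of ordinary particles:
summing the correlation identity over the `L - 2` neighbouring pairs of positions
(pair `k` runs over positions `(k+1, k+2)`, i.e. word indices `(k, k+1)`). -/
theorem particle_current (L n : ℕ) (p q : ℝ) :
    (∑ k : Fin (L - 2),
      ((∑ a ∈ univ.filter (fun a : Fin (L - 1) → Fin 2 =>
          ones a = n ∧ a ⟨k.1, by have := k.isLt; omega⟩ = 1
            ∧ a ⟨k.1 + 1, by have := k.isLt; omega⟩ = 0), wt p q a)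
       - ∑ a ∈ univ.filter (fun a : Fin (L - 1) → Fin 2 =>
          ones a = n ∧ a ⟨k.1, by have := k.isLt; omega⟩ = 0
            ∧ a ⟨k.1 + 1, by have := k.isLt; omega⟩ = 1), wt p q a))
    = (p - q) * (n : ℝ) * R (L - 1) n p q := by
  match L with
  | 0 | 1 =>
    have h : (n : ℝ) * R 0 n p q = 0 := by
      simpa [R, nsmul_eq_mul] using (sum_sum_filter_ones_eq_and_eq_one (m := 0) n (wt p q)).symm
    simp [mul_assoc, h]
  | m + 2 =>
    refine (sum_congr rfl fun k _ =>
      sum_filter_one_zero_sub_sum_filter_zero_one (m := m) n p q k).trans ?_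
    rw [← mul_sum]
    refine (congrArg _ (sum_sum_filter_ones_eq_and_eq_one (m := m) n (wt p q))).trans ?_
    rw [nsmul_eq_mul, mul_assoc]
    rfl
end

section
/- Let L > n ≥ 1 be integers, let p, q be real parameters, and fix a position k with 1 ≤ k ≤ L−1. Then the weighted sum over configurations having an ordinary particle at distance k in front of the tracer satisfies: ∑_{a : a_k = 1} w_{p,q}(a) = ∑_{j=0}^{L−n−1} ∑_{r=0}^{j} C(L−1−k, r) · C(k−1, j−r) · p^r · q^{j−r} · R(L−j−1, n−1; p, q), where the left-hand sum runs over all words a of length L−1 with entries in {0,1} having exactly n ones and a_k = 1, and C(·,·) denotes the binomial coefficient. -/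
/-!
Put `κ = k - 1`. If `a κ = 1`, the particle at `κ` adds to the factor of every zero `i` of `a`
a summand `c i`, equal to `p` if `i` lies after `κ` and to `q` otherwise; the rest of the factor
is the factor of the word with position `κ` deleted. Expanding the product over the zeros gives
a sum over sets `T` of zeros of `∏ i ∈ T, c i` times the weight of the word with `κ` and `T`
deleted. After exchanging the two sums, deleting `κ` and `T` is a bijection from the words with
`n` ones, `a κ = 1` and zeros on `T` onto all words of length `L - 2 - #T` with `n - 1` ones, so
the inner sum is `R (L - #T - 1) (n - 1)`. Counting the sets `T` by the number `r` of their
elements after `κ` produces the binomial coefficients, and `R` vanishes once `#T ≥ L - n`.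
-/

open Finset

open Function

lemma sum_powerset_union {α M : Type*} [DecidableEq α] [AddCommMonoid M] {A B : Finset α}
    (h : Disjoint A B) (f : Finset α → M) :
    ∑ T ∈ (A ∪ B).powerset, f T = ∑ T₁ ∈ A.powerset, ∑ T₂ ∈ B.powerset, f (T₁ ∪ T₂) := by
  induction A using Finset.induction_on generalizing f with
  | empty => simp
  | insert a A ha ih =>
    have hAB : Disjoint A B := h.mono_left (subset_insert a A)
    have haB : a ∉ A ∪ B := by simp [ha, disjoint_left.1 h (mem_insert_self a A)]
    rw [insert_union, sum_powerset_insert haB, sum_powerset_insert ha, ih hAB, ih hAB]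
    simp [insert_union]

lemma sum_powerset_union_prod_mul_card {α β : Type*} [DecidableEq α] [CommSemiring β]
    {A B : Finset α} (h : Disjoint A B) {c : α → β} {x y : β} (hA : ∀ i ∈ A, c i = x)
    (hB : ∀ i ∈ B, c i = y) (g : ℕ → β) :
    ∑ T ∈ (A ∪ B).powerset, (∏ i ∈ T, c i) * g #T =
      ∑ r ∈ range (#A + 1), ∑ s ∈ range (#B + 1),
        ((#A).choose r : β) * (#B).choose s * x ^ r * y ^ s * g (r + s) := by
  have hterm : ∀ T₁ ∈ A.powerset, ∀ T₂ ∈ B.powerset,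
      (∏ i ∈ T₁ ∪ T₂, c i) * g #(T₁ ∪ T₂) = x ^ #T₁ * (y ^ #T₂ * g (#T₁ + #T₂)) := by
    intro T₁ h₁ T₂ h₂
    rw [mem_powerset] at h₁ h₂
    have hd := h.mono h₁ h₂
    rw [prod_union hd, card_union_of_disjoint hd, prod_congr rfl fun i hi => hA i (h₁ hi),
      prod_congr rfl fun i hi => hB i (h₂ hi), prod_const, prod_const, mul_assoc]
  calc _ = ∑ T₁ ∈ A.powerset, ∑ s ∈ range (#B + 1),
        (#B).choose s • (x ^ #T₁ * (y ^ s * g (#T₁ + s))) := by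
        rw [sum_powerset_union h]
        refine sum_congr rfl fun T₁ h₁ => ?_
        rw [sum_congr rfl (hterm T₁ h₁)]
        exact sum_powerset_apply_card fun s => x ^ #T₁ * (y ^ s * g (#T₁ + s))
    _ = _ := by
        refine (sum_powerset_apply_card fun r => ∑ s ∈ range (#B + 1),
          (#B).choose s • (x ^ r * (y ^ s * g (r + s)))).trans ?_
        simp only [nsmul_eq_mul, mul_sum]
        exact sum_congr rfl fun r _ => sum_congr rfl fun s _ => by ring

lemma sum_range_sum_range_eq_sum_range_antidiagonal {M : Type*} [AddCommMonoid M] {a b N : ℕ}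
    (f : ℕ → ℕ → M) (hf : ∀ r s, a < r ∨ b < s ∨ N ≤ r + s → f r s = 0) :
    ∑ r ∈ range (a + 1), ∑ s ∈ range (b + 1), f r s
      = ∑ j ∈ range N, ∑ r ∈ range (j + 1), f r (j - r) := by
  have widen (A : Finset ℕ) (B : ℕ → Finset ℕ) (hA : A ⊆ range (a + b + N + 1))
      (hB : ∀ r ∈ A, B r ⊆ range (a + b + N + 1)) (h0 : ∀ r s, (r ∈ A ∧ s ∈ B r) ∨ f r s = 0) :
      ∑ r ∈ A, ∑ s ∈ B r, f r s
        = ∑ r ∈ range (a + b + N + 1), ∑ s ∈ range (a + b + N + 1), f r s := by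
    rw [sum_congr rfl fun r hr => sum_subset (hB r hr) fun s _ hs =>
      (h0 r s).resolve_left fun h => hs h.2]
    exact sum_subset hA fun r _ hr => sum_eq_zero fun s _ => (h0 r s).resolve_left fun h => hr h.1
  rw [sum_range_diag_flip]
  refine (widen _ _ (range_subset_range.2 (by omega)) (fun _ _ => range_subset_range.2 (by omega))
    fun r s => ?_).trans
    (widen _ _ (range_subset_range.2 (by omega)) (fun _ _ => range_subset_range.2 (by omega))
    fun r s => ?_).symm
  all_goals exact or_iff_not_imp_left.2 fun h => hf r s (by simp only [mem_range] at h; omega)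

lemma sum_comp_eq_sum_of_eqOn_compl {α β γ M : Type*} [Fintype α] [DecidableEq α] [Fintype γ]
    [AddCommMonoid M] {e : α → β} (he : Injective e) {U : Set β} (hU : Set.range e = U)
    {c : β → γ} {S : Finset (β → γ)} (hS : ∀ a, a ∈ S ↔ ∀ j ∉ U, a j = c j)
    (F : (α → γ) → M) :
    ∑ a ∈ S, F (a ∘ e) = ∑ b, F b := by
  have hout : ∀ j ∉ U, ¬∃ i, e i = j := fun j hj ⟨i, hi⟩ => hj (hU ▸ ⟨i, hi⟩)
  refine sum_nbij' (fun a => a ∘ e) (fun b => extend e b c) (by simp) ?_ ?_ ?_ (fun _ _ => rfl)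
  · exact fun b _ => (hS _).2 fun j hj => extend_apply' _ _ _ (hout j hj)
  · intro a ha
    funext j
    by_cases hj : j ∈ U
    · obtain ⟨i, rfl⟩ : j ∈ Set.range e := hU ▸ hj
      exact he.extend_apply _ _ _
    · rw [extend_apply' _ _ _ (hout j hj)]
      exact ((hS a).1 ha j hj).symm
  · exact fun b _ => extend_comp he _ _

section Weight

variable {ι : Type*} [LinearOrder ι] (p q : ℝ)

noncomputable def wtFactor (s : Finset ι) (a : ι → Fin 2) (i : ι) : ℝ :=
  1 + p * (#{j ∈ s | j < i ∧ a j = 1} : ℝ) + q * (#{j ∈ s | i < j ∧ a j = 1} : ℝ)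

/-- The weight `wt` of the subword of `a` read along the positions in `s`. -/
noncomputable def wtOn (s : Finset ι) (a : ι → Fin 2) : ℝ :=
  ∏ i ∈ s with a i = 0, wtFactor p q s a i

lemma wtOn_univ {m : ℕ} (a : Fin m → Fin 2) : wtOn p q univ a = wt p q a := rfl

lemma wtOn_map {κ : Type*} [LinearOrder κ] (e : κ ↪o ι) (s : Finset κ) (a : ι → Fin 2) :
    wtOn p q (s.map e.toEmbedding) a = wtOn p q s (a ∘ e) := by
  rw [wtOn, filter_map, prod_map]
  refine prod_congr rfl fun i _ => ?_
  simp only [wtFactor, filter_map, card_map, comp_apply, RelEmbedding.coe_toEmbedding,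
    e.lt_iff_lt]

lemma wtFactor_sdiff {s T : Finset ι} {a : ι → Fin 2} (hT : ∀ j ∈ T, a j = 0) (i : ι) :
    wtFactor p q (s \ T) a i = wtFactor p q s a i := by
  have hones (P : ι → Prop) [DecidablePred P] :
      {j ∈ s \ T | P j ∧ a j = 1} = {j ∈ s | P j ∧ a j = 1} := by
    ext j
    simp only [mem_filter, mem_sdiff]
    refine ⟨fun h => ⟨h.1.1, h.2⟩, fun h => ⟨⟨h.1, fun hj => ?_⟩, h.2⟩⟩
    simp [hT j hj] at h
  rw [wtFactor, wtFactor, hones (· < i), hones (i < ·)]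

lemma wtFactor_insert {s : Finset ι} {a : ι → Fin 2} {κ i : ι} (hκ : κ ∉ s) (ha : a κ = 1)
    (hi : i ≠ κ) :
    wtFactor p q (insert κ s) a i = (if κ < i then p else q) + wtFactor p q s a i := by
  have hκ' (P : ι → Prop) [DecidablePred P] : κ ∉ {j ∈ s | P j} := fun h => hκ (mem_filter.1 h).1
  rcases hi.lt_or_gt with h | h <;>
  · simp [wtFactor, filter_insert, h, h.not_gt, ha, card_insert_of_notMem (hκ' _)]
    ring

lemma wtOn_insert {s : Finset ι} {a : ι → Fin 2} {κ : ι} (hκ : κ ∉ s) (ha : a κ = 1) :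
    wtOn p q (insert κ s) a = ∑ T ∈ {i ∈ s | a i = 0}.powerset,
      (∏ i ∈ T, if κ < i then p else q) * wtOn p q (s \ T) a := by
  have hzeros : {i ∈ insert κ s | a i = 0} = {i ∈ s | a i = 0} := by
    rw [filter_insert, if_neg (by simp [ha])]
  have hne : ∀ i ∈ {i ∈ s | a i = 0}, i ≠ κ := fun i hi h => hκ (h ▸ (mem_filter.1 hi).1)
  rw [wtOn, hzeros, prod_congr rfl fun i hi => wtFactor_insert p q hκ ha (hne i hi), prod_add]
  refine sum_congr rfl fun T hT => ?_
  have hT0 : ∀ j ∈ T, a j = 0 := fun j hj => (mem_filter.1 (mem_powerset.1 hT hj)).2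
  have hzeros' : {i ∈ s \ T | a i = 0} = {i ∈ s | a i = 0} \ T := by
    ext i; simp only [mem_filter, mem_sdiff]; tauto
  rw [wtOn, hzeros']
  exact congrArg _ (prod_congr rfl fun i _ => (wtFactor_sdiff p q hT0 i).symm)

end Weight

lemma ones_eq_ones_comp_orderEmbOfFin_add {M m : ℕ} (U : Finset (Fin M)) (hU : #U = m)
    (a : Fin M → Fin 2) : ones a = ones (a ∘ U.orderEmbOfFin hU) + #{j ∈ Uᶜ | a j = 1} := by
  have hcomp : ones (a ∘ U.orderEmbOfFin hU) = #{j ∈ U | a j = 1} := by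
    conv_rhs => rw [← map_orderEmbOfFin_univ U hU, filter_map, card_map]
    rfl
  rw [hcomp, ← card_union_of_disjoint (disjoint_filter_filter disjoint_compl_right),
    ← filter_union, union_compl]
  rfl

lemma R_eq_zero_of_lt {L n : ℕ} (h : L - 1 < n) (p q : ℝ) : R L n p q = 0 := by
  refine sum_eq_zero fun a ha => absurd (mem_filter.1 ha).2 (ne_of_lt ?_)
  calc ones a ≤ #(univ : Finset (Fin (L - 1))) := card_filter_le _ _
    _ = L - 1 := card_fin _
    _ < n := h

lemma sum_wtOn_compl_insert (p q : ℝ) {M n : ℕ} (hn : 1 ≤ n) {κ : Fin M} {T : Finset (Fin M)}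
    (hκT : κ ∉ T) :
    ∑ a ∈ univ.filter (fun a : Fin M → Fin 2 => (ones a = n ∧ a κ = 1) ∧ ∀ i ∈ T, a i = 0),
      wtOn p q (insert κ T)ᶜ a = R (M - #T) (n - 1) p q := by
  let U : Finset (Fin M) := (insert κ T)ᶜ
  have hU : #U = M - #T - 1 := by
    rw [card_compl, card_insert_of_notMem hκT, Fintype.card_fin]
    omega
  let e := U.orderEmbOfFin hU
  have hmap : univ.map e.toEmbedding = U := map_orderEmbOfFin_univ U hU
  -- the values of `a` off `U`; deleting them leaves a word on `U` with one `1` fewer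
  let c : Fin M → Fin 2 := fun i => if i = κ then 1 else 0
  have hfix (a : Fin M → Fin 2) : (a κ = 1 ∧ ∀ i ∈ T, a i = 0) ↔ ∀ j ∉ U, a j = c j := by
    have hT : ∀ i ∈ T, i ≠ κ := fun i hi h => hκT (h ▸ hi)
    simp only [U, mem_compl, not_not, mem_insert, forall_eq_or_imp, c]
    exact and_congr_right fun _ => forall₂_congr fun i hi => by rw [if_neg (hT i hi)]
  have hones (a : Fin M → Fin 2) (ha : ∀ j ∉ U, a j = c j) :
      ones a = ones (a ∘ e) + 1 := by
    have hκ : {j ∈ Uᶜ | a j = 1} = {κ} := by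
      ext j
      by_cases hj : j ∈ U
      · simp [hj, show j ≠ κ by rintro rfl; simp [U] at hj]
      · simp [hj, ha j hj, c]
    rw [ones_eq_ones_comp_orderEmbOfFin_add U hU, hκ, card_singleton]
  calc _ = ∑ a ∈ univ.filter (fun a : Fin M → Fin 2 => a κ = 1 ∧ ∀ i ∈ T, a i = 0),
        if ones (a ∘ e) = n - 1 then wt p q (a ∘ e) else 0 := by
        rw [← sum_filter, filter_filter]
        refine sum_congr (filter_congr fun a _ => ?_) fun a _ => ?_
        · constructor
          · rintro ⟨⟨h1, h2⟩, h3⟩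
            have := hones a ((hfix a).1 ⟨h2, h3⟩)
            exact ⟨⟨h2, h3⟩, by omega⟩
          · rintro ⟨h, h'⟩
            have := hones a ((hfix a).1 h)
            exact ⟨⟨by omega, h.1⟩, h.2⟩
        · rw [← wtOn_univ, ← wtOn_map, hmap]
    _ = ∑ b, if ones b = n - 1 then wt p q b else 0 := by
        refine sum_comp_eq_sum_of_eqOn_compl e.injective (range_orderEmbOfFin U hU) (c := c)
          (fun a => ?_) fun b => if ones b = n - 1 then wt p q b else 0
        simpa using hfix a
    _ = R (M - #T) (n - 1) p q := (sum_filter _ _).symm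

lemma sum_wt_filter_eq_sum_powerset (p q : ℝ) {M n : ℕ} (hn : 1 ≤ n) (κ : Fin M) :
    ∑ a ∈ univ.filter (fun a : Fin M → Fin 2 => ones a = n ∧ a κ = 1), wt p q a
      = ∑ T ∈ (univ.erase κ).powerset,
          (∏ i ∈ T, if κ < i then p else q) * R (M - #T) (n - 1) p q := by
  have hexpand (a : Fin M → Fin 2) (ha : a κ = 1) : wt p q a = ∑ T ∈ (univ.erase κ).powerset,
      if ∀ i ∈ T, a i = 0 then
        (∏ i ∈ T, if κ < i then p else q) * wtOn p q (insert κ T)ᶜ a else 0 := by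
    have hcompl (T : Finset (Fin M)) : univ.erase κ \ T = (insert κ T)ᶜ := by
      ext; simp [and_comm]
    have hinsert : wt p q a = wtOn p q (insert κ (univ.erase κ)) a := by
      rw [insert_erase (mem_univ κ), wtOn_univ]
    rw [hinsert, wtOn_insert p q (notMem_erase κ univ) ha, ← sum_filter]
    refine sum_congr ?_ fun T _ => by rw [hcompl]
    ext T
    simp only [mem_powerset, mem_filter, subset_iff]
    exact forall₂_and
  rw [sum_congr rfl fun a ha => hexpand a (mem_filter.1 ha).2.2, sum_comm]
  refine sum_congr rfl fun T hT => ?_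
  rw [← sum_filter, filter_filter, ← mul_sum,
    sum_wtOn_compl_insert p q hn fun h => by simpa using mem_powerset.1 hT h]

/-- the weighted sum over configurations having an ordinary particle at
distance `k` in front of the tracer (word position `k`, i.e. index `k - 1`). -/
theorem density_front (L n k : ℕ) (hn1 : 1 ≤ n) (hk1 : 1 ≤ k)
    (hk2 : k ≤ L - 1) (p q : ℝ) :
    (∑ a ∈ univ.filter (fun a : Fin (L - 1) → Fin 2 =>
        ones a = n ∧ a ⟨k - 1, by omega⟩ = 1), wt p q a)
    = ∑ j ∈ Finset.range (L - n), ∑ r ∈ Finset.range (j + 1),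
        (Nat.choose (L - 1 - k) r : ℝ) * (Nat.choose (k - 1) (j - r) : ℝ)
          * p ^ r * q ^ (j - r) * R (L - j - 1) (n - 1) p q := by
  set κ : Fin (L - 1) := ⟨k - 1, by omega⟩
  have hsplit : univ.erase κ = Ioi κ ∪ Iio κ := by
    rw [← compl_singleton, ← Ioi_disjUnion_Iio, disjUnion_eq_union]
  have hafter : #(Ioi κ) = L - 1 - k := by simp [κ]; omega
  have hbefore : #(Iio κ) = k - 1 := by simp [κ]
  rw [sum_wt_filter_eq_sum_powerset p q hn1 κ, hsplit,
    sum_powerset_union_prod_mul_card (disjoint_Ioi_Iio κ)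
      (fun i hi => if_pos (mem_Ioi.1 hi)) (fun i hi => if_neg (mem_Iio.1 hi).not_gt)
      fun t => R (L - 1 - t) (n - 1) p q, hafter, hbefore]
  refine (sum_range_sum_range_eq_sum_range_antidiagonal _ fun r s h => ?_).trans
    (sum_congr rfl fun j _ => sum_congr rfl fun r hr => ?_)
  · -- `R` alone need not vanish here: for `r + s ≥ L - 1` its word length truncates to `0`
    by_cases hr : L - 1 - k < r
    · simp [Nat.choose_eq_zero_of_lt hr]
    by_cases hs : k - 1 < s
    · simp [Nat.choose_eq_zero_of_lt hs]
    rw [R_eq_zero_of_lt (by omega), mul_zero]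
  · rw [Nat.add_sub_cancel' (Nat.le_of_lt_succ (mem_range.1 hr)), Nat.sub_right_comm L 1 j]
end
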